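/- arXiv:1503.02773 — 8 statements merged into one kernel-verified Lean document; each statement's English description precedes it below -/
import Mathlib

section
/- If G is a comparability graph, M is a module of G, and x is a vertex in M, then combining a transitive orientation of the induced subgraph G[M] with a transitive orientation of G[(V(G) - M) ∪ {x}] (replacing x by M, i.e., orienting each edge between a vertex outside M and a vertex of M the same way as the corresponding edge to x) yields a transitive orientation of G. -/
/-- `d` is a transitive orientation of the subgraph of `G` induced on `S`:
each edge of `G[S]` gets exactly one direction, and directions compose transitively. -/
def IsTransOrientationOn {V : Type*} (G : SimpleGraph V) (S : Set V)
    (d : V → V → Prop) : Prop :=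
  (∀ a b, d a b → G.Adj a b ∧ a ∈ S ∧ b ∈ S) ∧
  (∀ a b, G.Adj a b → a ∈ S → b ∈ S → d a b ∨ d b a) ∧
  (∀ a b, d a b → ¬ d b a) ∧
  (∀ a b c, d a b → d b c → d a c)

/-- `M` is a module of `G`: every vertex outside `M` is adjacent to all of `M` or to
none of `M`. -/
def IsModule {V : Type*} (G : SimpleGraph V) (M : Set V) : Prop :=
  ∀ v ∉ M, (∀ m ∈ M, G.Adj v m) ∨ (∀ m ∈ M, ¬ G.Adj v m)

/-- `G` is prime: it has no non-trivial module. -/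
def IsPrimeGraph {V : Type*} (G : SimpleGraph V) : Prop :=
  ∀ M : Set V, IsModule G M → M.Subsingleton ∨ M = Set.univ

/-- `C` is a connected component of the subgraph of `G` induced on `S`. -/
def IsComponentOn {V : Type*} (G : SimpleGraph V) (S C : Set V) : Prop :=
  C ⊆ S ∧ C.Nonempty ∧
  (∀ a ∈ C, ∀ b ∈ C, Relation.ReflTransGen (fun p q => p ∈ S ∧ q ∈ S ∧ G.Adj p q) a b) ∧
  (∀ a ∈ C, ∀ b ∈ S, G.Adj a b → b ∈ C)

/-- `C` is a co-component of `G[S]`: a connected component of the complement of the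
subgraph of `G` induced on `S`. -/
def IsCoComponentOn {V : Type*} (G : SimpleGraph V) (S C : Set V) : Prop :=
  C ⊆ S ∧ C.Nonempty ∧
  (∀ a ∈ C, ∀ b ∈ C,
    Relation.ReflTransGen (fun p q => p ∈ S ∧ q ∈ S ∧ p ≠ q ∧ ¬ G.Adj p q) a b) ∧
  (∀ a ∈ C, ∀ b ∈ S, a ≠ b → ¬ G.Adj a b → b ∈ C)
/-- combining transitive orientations of `G[M]` and of
`G[(V ∖ M) ∪ {x}]` (replacing `x` by `M`) yields a transitive orientation of `G`. -/
theorem combined_orientation_transitive {V : Type*} (G : SimpleGraph V)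
    (hG : ∃ d, IsTransOrientationOn G Set.univ d)
    (M : Set V) (hM : IsModule G M) (x : V) (hx : x ∈ M)
    (d₁ d₂ : V → V → Prop)
    (h1 : IsTransOrientationOn G M d₁)
    (h2 : IsTransOrientationOn G ((Set.univ \ M) ∪ {x}) d₂) :
    IsTransOrientationOn G Set.univ (fun a b =>
      (a ∈ M ∧ b ∈ M ∧ d₁ a b) ∨
      (a ∉ M ∧ b ∉ M ∧ d₂ a b) ∨
      (a ∉ M ∧ b ∈ M ∧ d₂ a x) ∨
      (a ∈ M ∧ b ∉ M ∧ d₂ x b)) := by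
  obtain ⟨h1a, h1b, h1c, h1d⟩ := h1
  obtain ⟨h2a, h2b, h2c, h2d⟩ := h2
  have hxS : x ∈ (Set.univ \ M) ∪ {x} := Or.inr rfl
  have hS : ∀ a, a ∉ M → a ∈ (Set.univ \ M) ∪ {x} := fun a ha => Or.inl ⟨trivial, ha⟩
  refine ⟨?_, ?_, ?_, ?_⟩
  · rintro a b (⟨ha, hb, h⟩ | ⟨ha, hb, h⟩ | ⟨ha, hb, h⟩ | ⟨ha, hb, h⟩)
    · exact ⟨(h1a a b h).1, trivial, trivial⟩
    · exact ⟨(h2a a b h).1, trivial, trivial⟩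
    · have hax := (h2a a x h).1
      rcases hM a ha with hall | hnone
      · exact ⟨hall b hb, trivial, trivial⟩
      · exact absurd hax (hnone x hx)
    · have hxb := (h2a x b h).1
      rcases hM b hb with hall | hnone
      · exact ⟨(hall a ha).symm, trivial, trivial⟩
      · exact absurd hxb.symm (hnone x hx)
  · intro a b hab _ _
    by_cases ha : a ∈ M <;> by_cases hb : b ∈ M
    · rcases h1b a b hab ha hb with h | h
      · exact Or.inl (Or.inl ⟨ha, hb, h⟩)
      · exact Or.inr (Or.inl ⟨hb, ha, h⟩)
    · have hbx : G.Adj x b := by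
        rcases hM b hb with hall | hnone
        · exact (hall x hx).symm
        · exact absurd hab.symm (hnone a ha)
      rcases h2b x b hbx hxS (hS b hb) with h | h
      · exact Or.inl (Or.inr (Or.inr (Or.inr ⟨ha, hb, h⟩)))
      · exact Or.inr (Or.inr (Or.inr (Or.inl ⟨hb, ha, h⟩)))
    · have hax : G.Adj a x := by
        rcases hM a ha with hall | hnone
        · exact hall x hx
        · exact absurd hab (hnone b hb)
      rcases h2b a x hax (hS a ha) hxS with h | h
      · exact Or.inl (Or.inr (Or.inr (Or.inl ⟨ha, hb, h⟩)))
      · exact Or.inr (Or.inr (Or.inr (Or.inr ⟨hb, ha, h⟩)))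
    · rcases h2b a b hab (hS a ha) (hS b hb) with h | h
      · exact Or.inl (Or.inr (Or.inl ⟨ha, hb, h⟩))
      · exact Or.inr (Or.inr (Or.inl ⟨hb, ha, h⟩))
  · rintro a b (⟨ha, hb, h⟩ | ⟨ha, hb, h⟩ | ⟨ha, hb, h⟩ | ⟨ha, hb, h⟩)
      (⟨ha', hb', h'⟩ | ⟨ha', hb', h'⟩ | ⟨ha', hb', h'⟩ | ⟨ha', hb', h'⟩) <;>
      first
        | exact h1c _ _ h h'
        | exact h2c _ _ h h'
        | exact absurd ha hb' | exact absurd hb ha'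
        | exact absurd hb' ha | exact absurd ha' hb
  · rintro a b c (⟨ha, hb, h⟩ | ⟨ha, hb, h⟩ | ⟨ha, hb, h⟩ | ⟨ha, hb, h⟩)
      (⟨hb', hc, h'⟩ | ⟨hb', hc, h'⟩ | ⟨hb', hc, h'⟩ | ⟨hb', hc, h'⟩) <;>
      first
        | exact absurd hb hb' | exact absurd hb' hb
        | exact Or.inl ⟨ha, hc, h1d _ _ _ h h'⟩
        | exact Or.inr (Or.inl ⟨ha, hc, h2d _ _ _ h h'⟩)
        | exact Or.inr (Or.inr (Or.inl ⟨ha, hc, h2d _ _ _ h h'⟩))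
        | exact Or.inr (Or.inr (Or.inr ⟨ha, hc, h'⟩))
        | exact Or.inr (Or.inr (Or.inl ⟨ha, hc, h⟩))
        | exact absurd h' (h2c _ _ h)
        | exact Or.inr (Or.inr (Or.inr ⟨ha, hc, h2d _ _ _ h h'⟩))
end

section
/- Any two distinct slices of a Lexicographic Breadth-First Search of a graph are either disjoint or one is strictly contained in the other (i.e., slices form a laminar family). -/
/-- The LBFS label of vertex `v` just before step `t`: for each earlier step `i < t`
(in increasing order of `i`) at which a neighbour of `v` was explored, the value `n - i`
is appended. -/
def lbfsLabel {V : Type*} (G : SimpleGraph V) [DecidableRel G.Adj] (σ : ℕ → V)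
    (n t : ℕ) (v : V) : List ℕ :=
  ((List.range t).filter (fun i => decide (G.Adj (σ i) v))).map (fun i => n - i)

/-- `σ` (restricted to `[0,n)`) is a Lexicographic Breadth-First Search ordering of `G`:
it enumerates all vertices, and at each step the chosen vertex has lexicographically
largest label among the unexplored vertices. -/
def IsLBFS {V : Type*} (G : SimpleGraph V) [DecidableRel G.Adj] (n : ℕ) (σ : ℕ → V) : Prop :=
  Set.BijOn σ (Set.Iio n) Set.univ ∧
    ∀ t < n, ∀ v : V, (∀ i < t, σ i ≠ v) →
      ¬ List.Lex (· < ·) (lbfsLabel G σ n t (σ t)) (lbfsLabel G σ n t v)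

/-- The slice defined at step `t`: the unexplored vertices sharing the (lexicographically
largest) label of the chosen vertex `σ t` just before step `t`. -/
def sliceAt {V : Type*} (G : SimpleGraph V) [DecidableRel G.Adj] (σ : ℕ → V) (n t : ℕ) :
    Set V :=
  {v | (∀ i < t, σ i ≠ v) ∧ lbfsLabel G σ n t v = lbfsLabel G σ n t (σ t)}

/-- `S` is a slice of the LBFS. -/
def IsSlice {V : Type*} (G : SimpleGraph V) [DecidableRel G.Adj] (σ : ℕ → V) (n : ℕ)
    (S : Set V) : Prop :=
  ∃ t < n, S = sliceAt G σ n t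

/-- The slice defined at step `u` is a maximal (proper) subslice of the slice at step `t`. -/
def IsMaxSubsliceAt {V : Type*} (G : SimpleGraph V) [DecidableRel G.Adj] (σ : ℕ → V)
    (n t u : ℕ) : Prop :=
  u < n ∧ sliceAt G σ n u ⊂ sliceAt G σ n t ∧
    ∀ w < n, ¬(sliceAt G σ n u ⊂ sliceAt G σ n w ∧ sliceAt G σ n w ⊂ sliceAt G σ n t)

/-- `u 1, …, u k` are the steps defining the maximal subslices `S_1, …, S_k` of the slice
at step `t`, listed in the order the LBFS defines them (the initial vertex `σ t`, as a
singleton, being by convention the zeroth maximal subslice). -/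
def MaxSubsliceEnum {V : Type*} (G : SimpleGraph V) [DecidableRel G.Adj] (σ : ℕ → V)
    (n t k : ℕ) (u : ℕ → ℕ) : Prop :=
  (∀ i, 1 ≤ i → i ≤ k → IsMaxSubsliceAt G σ n t (u i)) ∧
  (∀ i j, 1 ≤ i → i < j → j ≤ k → u i < u j) ∧
  (∀ i, 1 ≤ i → i ≤ k → t < u i) ∧
  (∀ w, w < n → IsMaxSubsliceAt G σ n t w →
    ∃ i, 1 ≤ i ∧ i ≤ k ∧ sliceAt G σ n w = sliceAt G σ n (u i))

/-- The edge `ab` is active for the slice at step `t`: both endpoints lie in that slice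
but in different maximal subslices of it (i.e. no maximal subslice contains both). -/
def activeFor {V : Type*} (G : SimpleGraph V) [DecidableRel G.Adj] (σ : ℕ → V)
    (n t : ℕ) (a b : V) : Prop :=
  G.Adj a b ∧ a ∈ sliceAt G σ n t ∧ b ∈ sliceAt G σ n t ∧
    ∀ w, IsMaxSubsliceAt G σ n t w → ¬(a ∈ sliceAt G σ n w ∧ b ∈ sliceAt G σ n w)

/-!
Labels only grow by appending, and the entry appended at step `i` is `n - i`; so before
step `t ≤ n` every entry exceeds `n - t`, while entries appended later do not. Hence the label
before step `t` can be read off any later label. If the slices at steps `t ≤ u` share a vertex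
`v`, every vertex of the later slice has the same label as `v` before step `u`, hence before
step `t`, where `v` has the label of `σ t`: it lies in the slice at step `t`.
-/

section LBFS

variable {V : Type*} (G : SimpleGraph V) [DecidableRel G.Adj] (σ : ℕ → V) {n t u : ℕ}

theorem lbfsLabel_eq_filter_lbfsLabel (htu : t ≤ u) (htn : t ≤ n) (v : V) :
    lbfsLabel G σ n t v = (lbfsLabel G σ n u v).filter (fun x => n - t < x) := by
  obtain ⟨k, rfl⟩ := Nat.exists_eq_add_of_le htu
  simp only [lbfsLabel, List.range_add, List.filter_append, List.map_append]
  rw [List.filter_eq_self (p := fun x => decide (n - t < x)).mpr,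
    List.filter_eq_nil_iff (p := fun x => decide (n - t < x)).mpr, List.append_nil]
  · simp only [List.mem_map, List.mem_filter, List.mem_range, decide_eq_true_eq]
    rintro _ ⟨_, ⟨⟨x, -, rfl⟩, -⟩, rfl⟩
    omega
  · simp only [List.mem_map, List.mem_filter, List.mem_range, decide_eq_true_eq]
    rintro _ ⟨i, ⟨hi, -⟩, rfl⟩
    omega

theorem sliceAt_subset_of_not_disjoint (htu : t ≤ u) (htn : t ≤ n)
    (h : ¬Disjoint (sliceAt G σ n t) (sliceAt G σ n u)) :
    sliceAt G σ n u ⊆ sliceAt G σ n t := by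
  obtain ⟨v, hvt, hvu⟩ := Set.not_disjoint_iff.mp h
  intro w hwu
  refine ⟨fun i hi => hwu.1 i (hi.trans_le htu), ?_⟩
  rw [← hvt.2, lbfsLabel_eq_filter_lbfsLabel G σ htu htn,
    lbfsLabel_eq_filter_lbfsLabel G σ htu htn, hwu.2, hvu.2]

theorem disjoint_or_sliceAt_ssubset (htu : t ≤ u) (htn : t ≤ n)
    (hne : sliceAt G σ n u ≠ sliceAt G σ n t) :
    Disjoint (sliceAt G σ n t) (sliceAt G σ n u) ∨ sliceAt G σ n u ⊂ sliceAt G σ n t :=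
  or_iff_not_imp_left.mpr fun h =>
    (sliceAt_subset_of_not_disjoint G σ htu htn h).ssubset_of_ne hne

end LBFS

theorem slices_laminar_general {V : Type*} (G : SimpleGraph V) [DecidableRel G.Adj]
    (n : ℕ) (σ : ℕ → V) (S S' : Set V)
    (hS : IsSlice G σ n S) (hS' : IsSlice G σ n S') (hne : S ≠ S') :
    Disjoint S S' ∨ S ⊂ S' ∨ S' ⊂ S := by
  obtain ⟨t, ht, rfl⟩ := hS
  obtain ⟨u, hu, rfl⟩ := hS'
  rcases le_total t u with htu | hut
  · rcases disjoint_or_sliceAt_ssubset G σ htu ht.le hne.symm with h | h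
    · exact Or.inl h
    · exact Or.inr (Or.inr h)
  · rcases disjoint_or_sliceAt_ssubset G σ hut hu.le hne with h | h
    · exact Or.inl h.symm
    · exact Or.inr (Or.inl h)

/-- slices of an LBFS form a laminar family. -/
theorem slices_laminar {V : Type*} (G : SimpleGraph V) [DecidableRel G.Adj]
    (n : ℕ) (σ : ℕ → V) (hL : IsLBFS G n σ) (S S' : Set V)
    (hS : IsSlice G σ n S) (hS' : IsSlice G σ n S') (hne : S ≠ S') :
    Disjoint S S' ∨ S ⊂ S' ∨ S' ⊂ S :=
  slices_laminar_general G n σ S S' hS hS' hne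
end

section
/- Let S be a slice of an LBFS of a graph G, with initial vertex x. Then the neighbourhood of x inside S, N(x) ∩ S, is either empty or equal to the first maximal subslice of S (other than {x}). -/
theorem List.Lex.append_of_forall_rel {α : Type*} {r : α → α → Prop} {l₁ l₂ e₁ : List α}
    (h : List.Lex r l₁ l₂) (he : ∀ x ∈ e₁, ∀ y ∈ l₂, r x y) (e₂ : List α) :
    List.Lex r (l₁ ++ e₁) (l₂ ++ e₂) := by
  induction h with
  | nil =>
    cases e₁ with
    | nil => exact .nil
    | cons x _ => exact .rel (he x List.mem_cons_self _ List.mem_cons_self)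
  | rel hab => exact .rel hab
  | cons _ ih => exact .cons (ih fun x hx y hy => he x hx y (List.mem_cons_of_mem _ hy))

section Labels

variable {V : Type*} (G : SimpleGraph V) [DecidableRel G.Adj] {σ : ℕ → V} {n : ℕ}

theorem lbfsLabel_succ (t : ℕ) (v : V) :
    lbfsLabel G σ n (t + 1) v =
      lbfsLabel G σ n t v ++ if G.Adj (σ t) v then [n - t] else [] := by
  unfold lbfsLabel
  rw [List.range_succ, List.filter_append, List.map_append]
  by_cases h : G.Adj (σ t) v <;> simp [h]

theorem sub_lt_of_mem_lbfsLabel {t : ℕ} {v : V} {y : ℕ} (ht : t ≤ n)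
    (hy : y ∈ lbfsLabel G σ n t v) : n - t < y := by
  simp only [lbfsLabel, List.mem_map, List.mem_filter, List.mem_range] at hy
  obtain ⟨i, ⟨hi, -⟩, rfl⟩ := hy
  omega

theorem lbfsLabel_lex_succ {s : ℕ} {v w : V} (hs : s ≤ n)
    (h : List.Lex (· < ·) (lbfsLabel G σ n s v) (lbfsLabel G σ n s w)) :
    List.Lex (· < ·) (lbfsLabel G σ n (s + 1) v) (lbfsLabel G σ n (s + 1) w) := by
  rw [lbfsLabel_succ, lbfsLabel_succ]
  refine h.append_of_forall_rel (fun x hx y hy => ?_) _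
  have hx : x = n - s := by split_ifs at hx <;> simp_all
  exact hx ▸ sub_lt_of_mem_lbfsLabel G hs hy

theorem lbfsLabel_lex_mono {s t : ℕ} {v w : V} (hst : s ≤ t) (ht : t ≤ n)
    (h : List.Lex (· < ·) (lbfsLabel G σ n s v) (lbfsLabel G σ n s w)) :
    List.Lex (· < ·) (lbfsLabel G σ n t v) (lbfsLabel G σ n t w) := by
  induction t, hst using Nat.le_induction with
  | base => exact h
  | succ r _ ih => exact lbfsLabel_lex_succ G (by omega) (ih (by omega))

theorem lbfsLabel_eq_of_le {s t : ℕ} {v w : V} (hst : s ≤ t) (ht : t ≤ n)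
    (h : lbfsLabel G σ n t v = lbfsLabel G σ n t w) :
    lbfsLabel G σ n s v = lbfsLabel G σ n s w := by
  rcases lt_trichotomy (lbfsLabel G σ n s v) (lbfsLabel G σ n s w) with hlt | heq | hgt
  · exact absurd (h ▸ lbfsLabel_lex_mono G hst ht hlt) (irrefl _)
  · exact heq
  · exact absurd (h ▸ lbfsLabel_lex_mono G hst ht hgt) (irrefl _)

end Labels

section Slices

variable {V : Type*} (G : SimpleGraph V) [DecidableRel G.Adj] {σ : ℕ → V} {n : ℕ}

theorem self_mem_sliceAt (hσ : Set.InjOn σ (Set.Iio n)) {t : ℕ} (ht : t < n) :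
    σ t ∈ sliceAt G σ n t :=
  ⟨fun _ hi he => hi.ne (hσ (hi.trans ht) ht he), rfl⟩

theorem sliceAt_subset_sliceAt_of_mem {s t : ℕ} {v : V} (hst : s ≤ t) (ht : t ≤ n)
    (hvs : v ∈ sliceAt G σ n s) (hvt : v ∈ sliceAt G σ n t) :
    sliceAt G σ n t ⊆ sliceAt G σ n s := fun _ hz =>
  ⟨fun i hi => hz.1 i (hi.trans_le hst),
    (lbfsLabel_eq_of_le G hst ht (hz.2.trans hvt.2.symm)).trans hvs.2⟩

theorem isMaxSubsliceAt_succ (hσ : Set.InjOn σ (Set.Iio n)) {t : ℕ} (ht : t + 1 < n)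
    (hsub : sliceAt G σ n (t + 1) ⊂ sliceAt G σ n t) : IsMaxSubsliceAt G σ n t (t + 1) := by
  refine ⟨ht, hsub, fun w hw ⟨hlow, hhigh⟩ => ?_⟩
  have hx : σ (t + 1) ∈ sliceAt G σ n (t + 1) := self_mem_sliceAt G hσ ht
  have hxw : σ (t + 1) ∈ sliceAt G σ n w := hlow.subset hx
  rcases lt_trichotomy w (t + 1) with hlt | rfl | hgt
  · exact hhigh.not_subset
      (sliceAt_subset_sliceAt_of_mem G (by omega) (by omega) hxw (hsub.subset hx))
  · exact hlow.ne rfl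
  · exact hlow.not_subset (sliceAt_subset_sliceAt_of_mem G hgt.le hw.le hx hxw)

end Slices

namespace IsLBFS

variable {V : Type*} {G : SimpleGraph V} [DecidableRel G.Adj] {σ : ℕ → V} {n : ℕ}

theorem lt_of_unexplored (hL : IsLBFS G n σ) {t : ℕ} {v : V} (hv : ∀ i < t, σ i ≠ v) :
    t < n := by
  obtain ⟨i, hi, rfl⟩ := hL.1.surjOn (Set.mem_univ v)
  exact lt_of_not_ge fun h => hv i (lt_of_lt_of_le hi h) rfl

theorem lex_of_notMem_sliceAt (hL : IsLBFS G n σ) {t : ℕ} (ht : t < n) {v : V}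
    (hv : ∀ i < t, σ i ≠ v) (hvS : v ∉ sliceAt G σ n t) :
    List.Lex (· < ·) (lbfsLabel G σ n t v) (lbfsLabel G σ n t (σ t)) := by
  rcases lt_trichotomy (lbfsLabel G σ n t v) (lbfsLabel G σ n t (σ t)) with hlt | heq | hgt
  · exact hlt
  · exact absurd ⟨hv, heq⟩ hvS
  · exact absurd hgt (hL.2 t ht v hv)

theorem lex_succ_of_notMem_neighborSet_inter (hL : IsLBFS G n σ) {t : ℕ} (ht : t < n) {a z : V}
    (ha : a ∈ G.neighborSet (σ t) ∩ sliceAt G σ n t) (hz : ∀ i < t + 1, σ i ≠ z)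
    (hzA : z ∉ G.neighborSet (σ t) ∩ sliceAt G σ n t) :
    List.Lex (· < ·) (lbfsLabel G σ n (t + 1) z) (lbfsLabel G σ n (t + 1) a) := by
  by_cases hzS : z ∈ sliceAt G σ n t
  · have hax : G.Adj (σ t) a := ha.1
    have hzx : ¬ G.Adj (σ t) z := fun h => hzA ⟨h, hzS⟩
    rw [lbfsLabel_succ, lbfsLabel_succ, if_neg hzx, if_pos hax, List.append_nil, hzS.2, ha.2.2]
    simpa using List.Lex.append_left _ (List.Lex.nil : List.Lex (· < ·) [] [n - t]) _
  · have hzt : ∀ i < t, σ i ≠ z := fun i hi => hz i (by omega)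
    exact lbfsLabel_lex_succ G ht.le (ha.2.2 ▸ hL.lex_of_notMem_sliceAt ht hzt hzS)

theorem sliceAt_succ_eq_neighborSet_inter (hL : IsLBFS G n σ) {t : ℕ}
    (hA : (G.neighborSet (σ t) ∩ sliceAt G σ n t).Nonempty) :
    t + 1 < n ∧ sliceAt G σ n (t + 1) = G.neighborSet (σ t) ∩ sliceAt G σ n t := by
  set A := G.neighborSet (σ t) ∩ sliceAt G σ n t
  have hunexp : ∀ a ∈ A, ∀ i < t + 1, σ i ≠ a := fun a ha i hi he => by
    rcases Nat.lt_succ_iff_lt_or_eq.1 hi with hi | rfl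
    · exact ha.2.1 i hi he
    · exact G.loopless.irrefl (σ i) (he ▸ ha.1)
  obtain ⟨a, ha⟩ := hA
  have ht1 : t + 1 < n := hL.lt_of_unexplored (hunexp a ha)
  have ht : t < n := by omega
  have hxA : σ (t + 1) ∈ A := by
    by_contra h
    exact hL.2 (t + 1) ht1 a (hunexp a ha) (hL.lex_succ_of_notMem_neighborSet_inter ht ha
      (self_mem_sliceAt G hL.1.injOn ht1).1 h)
  refine ⟨ht1, Set.ext fun z => ⟨fun hz => ?_, fun hz => ⟨hunexp z hz, ?_⟩⟩⟩
  · by_contra hzA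
    exact irrefl _ (hz.2 ▸ hL.lex_succ_of_notMem_neighborSet_inter ht hxA hz.1 hzA)
  · have hzx : G.Adj (σ t) z := hz.1
    have hxx : G.Adj (σ t) (σ (t + 1)) := hxA.1
    rw [lbfsLabel_succ, lbfsLabel_succ, if_pos hzx, if_pos hxx, hz.2.2, hxA.2.2]

theorem sliceAt_one_eq_of_isMaxSubsliceAt_succ (hL : IsLBFS G n σ) {t k : ℕ} {u : ℕ → ℕ}
    (hu : MaxSubsliceEnum G σ n t k u) (ht1 : t + 1 < n)
    (hA : sliceAt G σ n (t + 1) = G.neighborSet (σ t) ∩ sliceAt G σ n t)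
    (hmax : IsMaxSubsliceAt G σ n t (t + 1)) :
    1 ≤ k ∧ sliceAt G σ n (u 1) = G.neighborSet (σ t) ∩ sliceAt G σ n t := by
  obtain ⟨i, hi1, hik, hi⟩ := hu.2.2.2 (t + 1) ht1 hmax
  have hk : 1 ≤ k := hi1.trans hik
  refine ⟨hk, ?_⟩
  obtain rfl | hi1 := hi1.eq_or_lt
  · rw [← hi, hA]
  have hmax1 := hu.1 1 le_rfl hk
  have htu : t < u 1 := hu.2.2.1 1 le_rfl hk
  have hx1 : σ (u 1) ∈ sliceAt G σ n (u 1) := self_mem_sliceAt G hL.1.injOn hmax1.1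
  by_cases hx1A : σ (u 1) ∈ G.neighborSet (σ t) ∩ sliceAt G σ n t
  · have hsub : sliceAt G σ n (u 1) ⊆ sliceAt G σ n (t + 1) :=
      sliceAt_subset_sliceAt_of_mem G htu hmax1.1.le (hA ▸ hx1A) hx1
    rw [← hA]
    by_contra hne
    exact hmax1.2.2 (t + 1) ht1 ⟨hsub.ssubset_of_ne hne, hmax.2.1⟩
  · -- `σ (u i) ∈ A` is still unexplored at step `u 1`, and its label beats that of `σ (u 1)`.
    have hlt : u 1 < u i := hu.2.1 1 i le_rfl hi1 hik
    have hy : σ (u i) ∈ sliceAt G σ n (u i) :=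
      self_mem_sliceAt G hL.1.injOn (hu.1 i hi1.le hik).1
    have hyA : σ (u i) ∈ G.neighborSet (σ t) ∩ sliceAt G σ n t := hA ▸ hi ▸ hy
    have hlex := hL.lex_succ_of_notMem_neighborSet_inter (htu.trans hmax1.1) hyA
      (fun j hj => hx1.1 j (by omega)) hx1A
    exact (hL.2 (u 1) hmax1.1 (σ (u i)) (fun j hj => hy.1 j (hj.trans hlt))
      (lbfsLabel_lex_mono G htu hmax1.1.le hlex)).elim

end IsLBFS

theorem initial_vertex_neighbourhood_general {V : Type*} (G : SimpleGraph V) [DecidableRel G.Adj]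
    (n : ℕ) (σ : ℕ → V) (hL : IsLBFS G n σ) (t : ℕ)
    (k : ℕ) (u : ℕ → ℕ) (hu : MaxSubsliceEnum G σ n t k u) :
    G.neighborSet (σ t) ∩ sliceAt G σ n t = ∅ ∨
      (1 ≤ k ∧ G.neighborSet (σ t) ∩ sliceAt G σ n t = sliceAt G σ n (u 1)) := by
  by_cases hA : G.neighborSet (σ t) ∩ sliceAt G σ n t = ∅
  · exact Or.inl hA
  obtain ⟨ht1, hslice⟩ := hL.sliceAt_succ_eq_neighborSet_inter (Set.nonempty_iff_ne_empty.2 hA)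
  have hx : σ t ∈ sliceAt G σ n t := self_mem_sliceAt G hL.1.injOn (by omega)
  have hsub : sliceAt G σ n (t + 1) ⊂ sliceAt G σ n t :=
    hslice ▸ Set.inter_subset_right.ssubset_of_not_subset fun h => G.loopless.irrefl _ (h hx).1
  obtain ⟨hk, hfirst⟩ := hL.sliceAt_one_eq_of_isMaxSubsliceAt_succ hu ht1 hslice
    (isMaxSubsliceAt_succ G hL.1.injOn ht1 hsub)
  exact Or.inr ⟨hk, hfirst.symm⟩

/-- for a slice `S` with initial vertex `x`, the set `N(x) ∩ S` is empty
or equals the first maximal subslice of `S` other than `{x}`. -/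
theorem initial_vertex_neighbourhood {V : Type*} (G : SimpleGraph V) [DecidableRel G.Adj]
    (n : ℕ) (σ : ℕ → V) (hL : IsLBFS G n σ) (t : ℕ) (ht : t < n)
    (k : ℕ) (u : ℕ → ℕ) (hu : MaxSubsliceEnum G σ n t k u) :
    G.neighborSet (σ t) ∩ sliceAt G σ n t = ∅ ∨
      (1 ≤ k ∧ G.neighborSet (σ t) ∩ sliceAt G σ n t = sliceAt G σ n (u 1)) :=
  initial_vertex_neighbourhood_general G n σ hL t k u hu
end

section
/- Let S be a slice of an LBFS of a graph G with maximal subslices x, S_1, ..., S_k in order. For every pair of indices i, j with 1 < i < j, there exists a vertex y lying in some S_ℓ with ℓ < i such that y is adjacent to every vertex of S_i and to no vertex of S_j. -/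
/-!
Write `S_0 = {x}, S_1, …, S_k` for the maximal subslices of `S`, `w` and `z` for the initial
vertices of `S_i` and `S_j`. Since `S_j` is a maximal subslice, `z ∉ S_i`, so the labels of `z`
and `w` first differ at some step `m < u_i`, and as `w` was chosen while `z` was unexplored,
`σ m` is adjacent to `w` but not to `z`. Both lie in `S`, so `m ≥ t`; and `m ≠ t`, because
only the first maximal subslice is adjacent to `x`. Hence `σ m` is a vertex of `S` explored
after `x` and before `w`, so it lies in some `S_ℓ` with `ℓ < i`; it sees all of `S_i` and none
of `S_j` because those vertices share the labels of `w` and `z` up to step `u_i`.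
-/

theorem Nat.exists_first_not_iff {p q : ℕ → Prop} {s : ℕ} (h : ¬ ∀ i < s, (p i ↔ q i)) :
    ∃ m < s, ¬(p m ↔ q m) ∧ ∀ i < m, (p i ↔ q i) := by
  classical
  have hex : ∃ m, m < s ∧ ¬(p m ↔ q m) := by simpa using h
  obtain ⟨hs, hne⟩ := Nat.find_spec hex
  refine ⟨Nat.find hex, hs, hne, fun i hi => ?_⟩
  by_contra hi'
  exact Nat.find_min hex hi ⟨hi.trans hs, hi'⟩

theorem List.lex_map_filter_of_first_diff {α β : Type*} [LT β] (f : α → β) {P Q : α → Bool}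
    {l₁ l₂ : List α} {a : α} (hl₁ : ∀ x ∈ l₁, P x = Q x) (hP : P a = false) (hQ : Q a = true)
    (hl₂ : ∀ x ∈ l₂, f x < f a) :
    List.Lex (· < ·) (((l₁ ++ a :: l₂).filter P).map f) (((l₁ ++ a :: l₂).filter Q).map f) := by
  rw [filter_append, filter_append, filter_congr hl₁, filter_cons_of_neg (by simp [hP]),
    filter_cons_of_pos hQ, map_append, map_append]
  refine Lex.append_left _ ?_ _
  cases hfilter : l₂.filter P with
  | nil => exact Lex.nil
  | cons b _ => exact Lex.rel (hl₂ b (mem_of_mem_filter (hfilter ▸ mem_cons_self)))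

section LBFS

variable {V : Type*} {G : SimpleGraph V} [DecidableRel G.Adj] {σ : ℕ → V} {n : ℕ}

theorem lbfsLabel_lex_of_first_diff {s m : ℕ} (hs : s ≤ n) (hm : m < s) {v w : V}
    (hv : ¬ G.Adj (σ m) v) (hw : G.Adj (σ m) w)
    (hvw : ∀ i < m, (G.Adj (σ i) v ↔ G.Adj (σ i) w)) :
    List.Lex (· < ·) (lbfsLabel G σ n s v) (lbfsLabel G σ n s w) := by
  have hrange : List.range s =
      List.range m ++ m :: (List.range (s - (m + 1))).map (m + 1 + ·) := by
    rw [← List.singleton_append, ← List.append_assoc, ← List.range_succ, ← List.range_add]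
    congr 1
    omega
  unfold lbfsLabel
  rw [hrange]
  refine List.lex_map_filter_of_first_diff _ (fun i hi => ?_) (by simpa using hv)
    (by simpa using hw) (fun i hi => ?_)
  · simpa using hvw i (List.mem_range.1 hi)
  · simp only [List.mem_map, List.mem_range] at hi
    omega

theorem lbfsLabel_eq_iff {s : ℕ} (hs : s ≤ n) {v w : V} :
    lbfsLabel G σ n s v = lbfsLabel G σ n s w ↔ ∀ i < s, (G.Adj (σ i) v ↔ G.Adj (σ i) w) := by
  refine ⟨fun heq => ?_, fun h => ?_⟩
  · by_contra hne
    obtain ⟨m, hm, hdiff, hagree⟩ := Nat.exists_first_not_iff hne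
    by_cases hv : G.Adj (σ m) v
    · have hlex := lbfsLabel_lex_of_first_diff hs hm (fun hw => hdiff (iff_of_true hv hw)) hv
        (fun i hi => (hagree i hi).symm)
      exact irrefl _ (heq ▸ hlex)
    · have hlex := lbfsLabel_lex_of_first_diff hs hm hv (by tauto) hagree
      exact irrefl _ (heq ▸ hlex)
  · unfold lbfsLabel
    congr 1
    exact List.filter_congr fun i hi => by simpa using h i (List.mem_range.1 hi)

theorem mem_sliceAt_iff {s : ℕ} (hs : s ≤ n) {v : V} :
    v ∈ sliceAt G σ n s ↔
      (∀ i < s, σ i ≠ v) ∧ ∀ i < s, (G.Adj (σ i) v ↔ G.Adj (σ i) (σ s)) :=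
  and_congr_right fun _ => lbfsLabel_eq_iff hs

theorem adj_iff_of_mem_sliceAt {s i : ℕ} (hs : s ≤ n) (hi : i < s) {v w : V}
    (hv : v ∈ sliceAt G σ n s) (hw : w ∈ sliceAt G σ n s) :
    G.Adj (σ i) v ↔ G.Adj (σ i) w :=
  (lbfsLabel_eq_iff hs).1 (hv.2.trans hw.2.symm) i hi

theorem apply_not_mem_sliceAt {i s : ℕ} (hi : i < s) : σ i ∉ sliceAt G σ n s :=
  fun h => h.1 i hi rfl

theorem sliceAt_subset_of_mem {p q : ℕ} (hpq : p ≤ q) (hq : q ≤ n) {x : V}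
    (hxp : x ∈ sliceAt G σ n p) (hxq : x ∈ sliceAt G σ n q) :
    sliceAt G σ n q ⊆ sliceAt G σ n p := by
  intro v hv
  rw [mem_sliceAt_iff hq] at hv hxq
  rw [mem_sliceAt_iff (hpq.trans hq)] at hxp ⊢
  refine ⟨fun i hi => hv.1 i (by omega), fun i hi => ?_⟩
  calc G.Adj (σ i) v ↔ G.Adj (σ i) (σ q) := hv.2 i (by omega)
    _ ↔ G.Adj (σ i) x := (hxq.2 i (by omega)).symm
    _ ↔ G.Adj (σ i) (σ p) := hxp.2 i hi

theorem exists_isMaxSubsliceAt_mem {t m : ℕ} (hm : m < n) {x : V}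
    (hx : x ∈ sliceAt G σ n m) (hsub : sliceAt G σ n m ⊂ sliceAt G σ n t) :
    ∃ r, IsMaxSubsliceAt G σ n t r ∧ x ∈ sliceAt G σ n r := by
  classical
  have hex : ∃ r, x ∈ sliceAt G σ n r ∧ sliceAt G σ n r ⊂ sliceAt G σ n t := ⟨m, hx, hsub⟩
  obtain ⟨hxr, hrsub⟩ := Nat.find_spec hex
  have hrn : Nat.find hex < n := (Nat.find_min' hex ⟨hx, hsub⟩).trans_lt hm
  refine ⟨Nat.find hex, ⟨hrn, hrsub, fun w hw ⟨hrw, hwt⟩ => ?_⟩, hxr⟩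
  have hxw := hrw.1 hxr
  have hwr : w < Nat.find hex := by
    by_contra! hge
    exact hrw.2 (sliceAt_subset_of_mem hge hw.le hxr hxw)
  exact Nat.find_min hex hwr ⟨hxw, hwt⟩

namespace IsLBFS

variable (hL : IsLBFS G n σ)
include hL

theorem apply_ne_of_lt {i s : ℕ} (hs : s < n) (hi : i < s) : σ i ≠ σ s :=
  hL.1.injOn.ne (hi.trans hs) hs hi.ne

theorem mem_sliceAt_self {s : ℕ} (hs : s < n) : σ s ∈ sliceAt G σ n s :=
  (mem_sliceAt_iff hs.le).2 ⟨fun _ hi => hL.apply_ne_of_lt hs hi, fun _ _ => Iff.rfl⟩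

theorem adj_apply_of_adj {s m : ℕ} (hs : s < n) (hm : m < s) {v : V} (hv : ∀ i < s, σ i ≠ v)
    (hagree : ∀ i < m, (G.Adj (σ i) (σ s) ↔ G.Adj (σ i) v)) (hadj : G.Adj (σ m) v) :
    G.Adj (σ m) (σ s) := by
  by_contra h
  exact hL.2 s hs v hv (lbfsLabel_lex_of_first_diff hs.le hm h hadj hagree)

theorem exists_adj_apply_not_adj {s : ℕ} (hs : s < n) {v : V} (hv : ∀ i < s, σ i ≠ v)
    (hvs : v ∉ sliceAt G σ n s) : ∃ m < s, G.Adj (σ m) (σ s) ∧ ¬ G.Adj (σ m) v := by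
  rw [mem_sliceAt_iff hs.le, not_and] at hvs
  obtain ⟨m, hm, hdiff, hagree⟩ := Nat.exists_first_not_iff (hvs hv)
  have hagree' : ∀ i < m, (G.Adj (σ i) (σ s) ↔ G.Adj (σ i) v) := fun i hi => (hagree i hi).symm
  have hnadj : ¬ G.Adj (σ m) v := fun hadj =>
    hdiff (iff_of_true hadj (hL.adj_apply_of_adj hs hm hv hagree' hadj))
  exact ⟨m, hm, by tauto, hnadj⟩

theorem apply_mem_sliceAt {t s : ℕ} (hts : t < s) (hs : s < n) {w : V}
    (hwt : w ∈ sliceAt G σ n t) (hw : ∀ i < s, σ i ≠ w) : σ s ∈ sliceAt G σ n t := by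
  have ht : t < n := hts.trans hs
  rw [mem_sliceAt_iff ht.le] at hwt ⊢
  refine ⟨fun i hi => hL.apply_ne_of_lt hs (hi.trans hts), ?_⟩
  by_contra hne
  obtain ⟨m, hm, hdiff, hagree⟩ := Nat.exists_first_not_iff hne
  by_cases hadj : G.Adj (σ m) (σ s)
  · exact hdiff (iff_of_true hadj <| hL.adj_apply_of_adj ht hm
      (fun i hi => hL.apply_ne_of_lt hs (hi.trans hts)) (fun i hi => (hagree i hi).symm) hadj)
  · refine hadj (hL.adj_apply_of_adj hs (hm.trans hts) hw (fun i hi => ?_) ?_)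
    · exact (hagree i hi).trans (hwt.2 i (hi.trans hm)).symm
    · exact (hwt.2 m hm).2 (by tauto)

theorem sliceAt_ssubset {t r : ℕ} (htr : t < r) (hr : r < n) (hrt : σ r ∈ sliceAt G σ n t) :
    sliceAt G σ n r ⊂ sliceAt G σ n t :=
  ⟨sliceAt_subset_of_mem htr.le hr.le hrt (hL.mem_sliceAt_self hr),
    fun h => apply_not_mem_sliceAt htr (h (hL.mem_sliceAt_self (htr.trans hr)))⟩

theorem mem_sliceAt_succ {t : ℕ} (ht : t + 1 < n) {w : V} (hwt : w ∈ sliceAt G σ n t)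
    (hw : ∀ i < t + 1, σ i ≠ w) (hadj : G.Adj (σ t) w) : w ∈ sliceAt G σ n (t + 1) := by
  have hnext := hL.apply_mem_sliceAt (Nat.lt_succ_self t) ht hwt hw
  have hagree : ∀ i < t, (G.Adj (σ i) w ↔ G.Adj (σ i) (σ (t + 1))) :=
    fun i hi => adj_iff_of_mem_sliceAt (by omega) hi hwt hnext
  rw [mem_sliceAt_iff ht.le]
  refine ⟨hw, fun i hi => ?_⟩
  rcases Nat.lt_succ_iff_lt_or_eq.1 hi with hi | rfl
  · exact hagree i hi
  · exact iff_of_true hadj <| hL.adj_apply_of_adj ht (Nat.lt_succ_self i)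
      (fun i hi => hw i hi) (fun j hj => (hagree j hj).symm) hadj

end IsLBFS

namespace IsMaxSubsliceAt

variable {t p : ℕ} (hp : IsMaxSubsliceAt G σ n t p)
include hp

theorem eq_of_apply_mem (hL : IsLBFS G n σ) {r : ℕ} (hrp : r ≤ p)
    (hpr : σ p ∈ sliceAt G σ n r) (hrt : sliceAt G σ n r ⊂ sliceAt G σ n t) : r = p := by
  by_contra hne
  have hsub := sliceAt_subset_of_mem hrp hp.1.le hpr (hL.mem_sliceAt_self hp.1)
  refine hp.2.2 r (hrp.trans_lt hp.1) ⟨⟨hsub, fun h => ?_⟩, hrt⟩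
  exact apply_not_mem_sliceAt (lt_of_le_of_ne hrp hne) (h (hL.mem_sliceAt_self (hrp.trans_lt hp.1)))

theorem not_adj_of_succ_lt (hL : IsLBFS G n σ) (htp : t + 1 < p) : ¬ G.Adj (σ t) (σ p) := by
  intro hadj
  have hpt := hp.2.1.1 (hL.mem_sliceAt_self hp.1)
  have hsucc := hL.mem_sliceAt_succ (htp.trans hp.1) hpt
    (fun i hi => hL.apply_ne_of_lt hp.1 (hi.trans htp)) hadj
  have hssub := hL.sliceAt_ssubset (Nat.lt_succ_self t) (htp.trans hp.1)
    (hL.apply_mem_sliceAt (Nat.lt_succ_self t) (htp.trans hp.1) hpt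
      (fun i hi => hL.apply_ne_of_lt hp.1 (hi.trans htp)))
  exact htp.ne (hp.eq_of_apply_mem hL htp.le hsucc hssub)

end IsMaxSubsliceAt

namespace MaxSubsliceEnum

variable {t k : ℕ} {u : ℕ → ℕ} (hu : MaxSubsliceEnum G σ n t k u)
include hu

theorem strictMonoOn : StrictMonoOn u (Set.Icc 1 k) :=
  fun i hi j hj hij => hu.2.1 i j hi.1 hij hj.2

theorem exists_apply_mem (hL : IsLBFS G n σ) {m : ℕ} (htm : t < m) (hm : m < n)
    (hmt : σ m ∈ sliceAt G σ n t) :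
    ∃ ℓ, 1 ≤ ℓ ∧ ℓ ≤ k ∧ u ℓ ≤ m ∧ σ m ∈ sliceAt G σ n (u ℓ) := by
  obtain ⟨r, hr, hmr⟩ := exists_isMaxSubsliceAt_mem hm (hL.mem_sliceAt_self hm)
    (hL.sliceAt_ssubset htm hm hmt)
  obtain ⟨ℓ, hℓ1, hℓk, hrℓ⟩ := hu.2.2.2 r hr.1 hr
  rw [hrℓ] at hmr
  exact ⟨ℓ, hℓ1, hℓk, not_lt.1 fun h => apply_not_mem_sliceAt h hmr, hmr⟩

end MaxSubsliceEnum

end LBFS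

/-- for maximal subslices `S_i, S_j` with `1 < i < j`, some vertex of an
earlier maximal subslice `S_ℓ` (ℓ < i) is universal to `S_i` and isolated from `S_j`. -/
theorem earlier_distinguishing_vertex {V : Type*} (G : SimpleGraph V) [DecidableRel G.Adj]
    (n : ℕ) (σ : ℕ → V) (hL : IsLBFS G n σ) (t : ℕ) (ht : t < n)
    (k : ℕ) (u : ℕ → ℕ) (hu : MaxSubsliceEnum G σ n t k u) :
    ∀ i j, 1 < i → i < j → j ≤ k →
      ∃ ℓ, 1 ≤ ℓ ∧ ℓ < i ∧ ∃ y ∈ sliceAt G σ n (u ℓ),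
        (∀ z ∈ sliceAt G σ n (u i), G.Adj y z) ∧
        (∀ z ∈ sliceAt G σ n (u j), ¬ G.Adj y z) := by
  intro i j hi hij hjk
  have hSi := hu.1 i (by omega) (by omega)
  have hSj := hu.1 j (by omega) hjk
  have hwi := hL.mem_sliceAt_self hSi.1
  have hzj := hL.mem_sliceAt_self hSj.1
  have huij : u i < u j := hu.strictMonoOn ⟨by omega, by omega⟩ ⟨by omega, hjk⟩ hij
  have hti : t + 1 < u i :=
    Nat.lt_of_le_of_lt (hu.2.2.1 1 le_rfl (by omega)) (hu.2.1 1 i le_rfl hi (by omega))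
  have hz : σ (u j) ∉ sliceAt G σ n (u i) := fun h =>
    huij.ne (hSj.eq_of_apply_mem hL huij.le h hSi.2.1)
  obtain ⟨m, hmi, hwm, hzm⟩ := hL.exists_adj_apply_not_adj hSi.1
    (fun i' hi' => hL.apply_ne_of_lt hSj.1 (hi'.trans huij)) hz
  have htm : t < m := by
    rcases lt_trichotomy m t with hmt | rfl | hmt
    · exact absurd ((adj_iff_of_mem_sliceAt ht.le hmt (hSi.2.1.1 hwi) (hSj.2.1.1 hzj)).1 hwm) hzm
    · exact absurd hwm (hSi.not_adj_of_succ_lt hL hti)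
    · exact hmt
  have hmt : σ m ∈ sliceAt G σ n t := hL.apply_mem_sliceAt htm (hmi.trans hSi.1) (hSi.2.1.1 hwi)
    (fun i' hi' => hL.apply_ne_of_lt hSi.1 (hi'.trans hmi))
  obtain ⟨ℓ, hℓ1, hℓk, huℓ, hmℓ⟩ := hu.exists_apply_mem hL htm (hmi.trans hSi.1) hmt
  have hℓi : ℓ < i :=
    (hu.strictMonoOn.lt_iff_lt ⟨hℓ1, hℓk⟩ ⟨by omega, by omega⟩).1 (huℓ.trans_lt hmi)
  refine ⟨ℓ, hℓ1, hℓi, σ m, hmℓ, fun z hz => ?_, fun z hz hadj => ?_⟩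
  · exact (adj_iff_of_mem_sliceAt hSi.1.le hmi hwi hz).1 hwm
  · exact hzm ((adj_iff_of_mem_sliceAt hSj.1.le (hmi.trans huij) hzj hz).2 hadj)
end

section
/- For every edge of a graph G, there is exactly one slice of a given LBFS for which that edge is active, i.e., exactly one slice S such that the two endpoints lie in distinct maximal subslices of S. -/
lemma takeWhile_append_all {α} (p : α → Bool) (l1 l2 : List α)
    (h1 : ∀ x ∈ l1, p x = true) (h2 : ∀ x ∈ l2, p x = false) :
    (l1 ++ l2).takeWhile p = l1 := by
  induction l1 with
  | nil =>
    cases l2 with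
    | nil => rfl
    | cons a l => simp [List.takeWhile_cons, h2 a (by simp)]
  | cons a l ih =>
    simp only [List.cons_append, List.takeWhile_cons, h1 a (by simp)]
    simp [ih (fun x hx => h1 x (by simp [hx]))]

lemma label_prefix {V : Type*} (G : SimpleGraph V) [DecidableRel G.Adj] (σ : ℕ → V)
    {n s t : ℕ} (hst : s ≤ t) (hn : s ≤ n) (v : V) :
    lbfsLabel G σ n s v = (lbfsLabel G σ n t v).takeWhile (fun x => decide (n - s < x)) := by
  unfold lbfsLabel
  have : t = s + (t - s) := by omega
  rw [this, List.range_add, List.filter_append, List.map_append]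
  rw [takeWhile_append_all]
  · intro x hx
    simp only [List.mem_map, List.mem_filter, List.mem_range] at hx
    obtain ⟨i, ⟨hi, -⟩, rfl⟩ := hx
    simp only [decide_eq_true_eq]
    omega
  · intro x hx
    simp only [List.mem_map, List.mem_filter, List.mem_map, List.mem_range] at hx
    obtain ⟨i, ⟨⟨j, hj, rfl⟩, -⟩, rfl⟩ := hx
    simp only [decide_eq_false_iff_not, not_lt]
    omega

lemma label_eq_of_label_eq {V : Type*} (G : SimpleGraph V) [DecidableRel G.Adj] (σ : ℕ → V)
    {n s t : ℕ} (hst : s ≤ t) (hn : s ≤ n) {v w : V}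
    (h : lbfsLabel G σ n t v = lbfsLabel G σ n t w) :
    lbfsLabel G σ n s v = lbfsLabel G σ n s w := by
  rw [label_prefix G σ hst hn v, label_prefix G σ hst hn w, h]

lemma slice_subset_or_disjoint {V : Type*} (G : SimpleGraph V) [DecidableRel G.Adj]
    (σ : ℕ → V) {n s t : ℕ} (hst : s ≤ t) (hn : s ≤ n) :
    sliceAt G σ n t ⊆ sliceAt G σ n s ∨
      ∀ v, v ∈ sliceAt G σ n s → v ∉ sliceAt G σ n t := by
  by_cases h : lbfsLabel G σ n s (σ t) = lbfsLabel G σ n s (σ s)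
  · left
    rintro v ⟨hv1, hv2⟩
    exact ⟨fun i hi => hv1 i (lt_of_lt_of_le hi hst),
      (label_eq_of_label_eq G σ hst hn hv2).trans h⟩
  · right
    rintro v ⟨-, hv2s⟩ ⟨-, hv2t⟩
    exact h (((label_eq_of_label_eq G σ hst hn hv2t).symm.trans hv2s))

lemma slice_nested {V : Type*} (G : SimpleGraph V) [DecidableRel G.Adj]
    (σ : ℕ → V) {n s t : ℕ} (hs : s ≤ n) (ht : t ≤ n) {v : V}
    (hvs : v ∈ sliceAt G σ n s) (hvt : v ∈ sliceAt G σ n t) :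
    sliceAt G σ n s ⊆ sliceAt G σ n t ∨ sliceAt G σ n t ⊆ sliceAt G σ n s := by
  rcases le_total s t with h | h
  · rcases slice_subset_or_disjoint G σ h hs with h' | h'
    · exact Or.inr h'
    · exact absurd hvt (h' v hvs)
  · rcases slice_subset_or_disjoint G σ h ht with h' | h'
    · exact Or.inl h'
    · exact absurd hvs (h' v hvt)

lemma exists_max_subslice {V : Type*} (G : SimpleGraph V) [DecidableRel G.Adj]
    (σ : ℕ → V) {n s t : ℕ} (hfin : (Set.univ : Set V).Finite)
    (ht : t < n) (hs : s < n) (hss : sliceAt G σ n s ⊂ sliceAt G σ n t) :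
    ∃ w, IsMaxSubsliceAt G σ n t w ∧ sliceAt G σ n s ⊆ sliceAt G σ n w := by
  classical
  set W : Finset ℕ := (Finset.range n).filter
    (fun w => sliceAt G σ n s ⊆ sliceAt G σ n w ∧ sliceAt G σ n w ⊂ sliceAt G σ n t) with hW
  have hsW : s ∈ W := by
    simp only [hW, Finset.mem_filter, Finset.mem_range]
    exact ⟨hs, subset_rfl, hss⟩
  obtain ⟨w, hwW, hwmax⟩ := W.exists_max_image (fun w => (sliceAt G σ n w).ncard) ⟨s, hsW⟩
  simp only [hW, Finset.mem_filter, Finset.mem_range] at hwW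
  obtain ⟨hwn, hsub, hwt⟩ := hwW
  refine ⟨w, ⟨hwn, hwt, ?_⟩, hsub⟩
  rintro w' hw' ⟨h1, h2⟩
  have hw'W : w' ∈ W := by
    simp only [hW, Finset.mem_filter, Finset.mem_range]
    exact ⟨hw', hsub.trans h1.subset, h2⟩
  have := hwmax w' hw'W
  have hlt : (sliceAt G σ n w).ncard < (sliceAt G σ n w').ncard :=
    Set.ncard_lt_ncard h1 (hfin.subset (Set.subset_univ _))
  omega


/-- every edge is active for exactly one slice. -/
theorem edge_active_unique_slice {V : Type*} (G : SimpleGraph V) [DecidableRel G.Adj]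
    (n : ℕ) (σ : ℕ → V) (hL : IsLBFS G n σ) (a b : V) (hab : G.Adj a b) :
    ∃ t, t < n ∧ activeFor G σ n t a b ∧
      ∀ t', t' < n → activeFor G σ n t' a b → sliceAt G σ n t' = sliceAt G σ n t := by
  classical
  have hsurj : (Set.univ : Set V) ⊆ σ '' Set.Iio n := hL.1.2.2
  have hfin : (Set.univ : Set V).Finite :=
    Set.Finite.subset ((Set.finite_Iio n).image σ) hsurj
  have hn0 : 0 < n := by
    obtain ⟨i, hi, -⟩ := hsurj (Set.mem_univ a)
    exact Nat.pos_of_ne_zero (by intro h; subst h; exact absurd hi (by simp))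
  have hmem0 : ∀ v : V, v ∈ sliceAt G σ n 0 := by
    intro v
    exact ⟨fun i hi => absurd hi (Nat.not_lt_zero i), rfl⟩
  set T : Finset ℕ := (Finset.range n).filter
    (fun t => a ∈ sliceAt G σ n t ∧ b ∈ sliceAt G σ n t) with hT
  have h0T : (0 : ℕ) ∈ T := by
    simp only [hT, Finset.mem_filter, Finset.mem_range]
    exact ⟨hn0, hmem0 a, hmem0 b⟩
  obtain ⟨t, htT, htmin⟩ := T.exists_min_image (fun t => (sliceAt G σ n t).ncard) ⟨0, h0T⟩
  simp only [hT, Finset.mem_filter, Finset.mem_range] at htT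
  obtain ⟨htn, haT, hbT⟩ := htT
  have hactive : activeFor G σ n t a b := by
    refine ⟨hab, haT, hbT, ?_⟩
    rintro w ⟨hwn, hwt, -⟩ ⟨haw, hbw⟩
    have hwT : w ∈ T := by
      simp only [hT, Finset.mem_filter, Finset.mem_range]
      exact ⟨hwn, haw, hbw⟩
    have := htmin w hwT
    have hlt : (sliceAt G σ n w).ncard < (sliceAt G σ n t).ncard :=
      Set.ncard_lt_ncard hwt (hfin.subset (Set.subset_univ _))
    omega
  refine ⟨t, htn, hactive, ?_⟩
  intro t' ht' hact'
  by_contra hne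
  have haT' := hact'.2.1
  have hbT' := hact'.2.2.1
  rcases slice_nested G σ (le_of_lt ht') (le_of_lt htn) haT' haT with hsub | hsub
  · -- sliceAt t' ⊆ sliceAt t, strict since ≠
    have hss : sliceAt G σ n t' ⊂ sliceAt G σ n t := ⟨hsub, fun h => hne (hsub.antisymm h)⟩
    obtain ⟨w, hw, hw2⟩ := exists_max_subslice G σ hfin htn ht' hss
    exact hactive.2.2.2 w hw ⟨hw2 haT', hw2 hbT'⟩
  · have hss : sliceAt G σ n t ⊂ sliceAt G σ n t' := ⟨hsub, fun h => hne (h.antisymm hsub)⟩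
    obtain ⟨w, hw, hw2⟩ := exists_max_subslice G σ hfin ht' htn hss
    exact hact'.2.2.2 w hw ⟨hw2 haT, hw2 hbT⟩
end

section
/- Let G be a comparability graph with a transitive orientation, let x be a vertex, and let C be a connected component of the complement of the subgraph induced on N(x). Then either every edge between x and C is directed toward x, or every edge between x and C is directed away from x. -/
/-- for a co-component `C` of the subgraph induced on `N(x)`, all edges
between `x` and `C` are directed the same way in a transitive orientation. -/
theorem cocomponent_of_neighbourhood_same_direction {V : Type*} (G : SimpleGraph V)
    (d : V → V → Prop) (hd : IsTransOrientationOn G Set.univ d) (x : V)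
    (C : Set V) (hC : IsCoComponentOn G (G.neighborSet x) C) :
    (∀ c ∈ C, d c x) ∨ (∀ c ∈ C, d x c) := by
  obtain ⟨hsub, ⟨c0, hc0⟩, hconn, _⟩ := hC
  obtain ⟨hadj, htot, hasym, htrans⟩ := hd
  have key : ∀ a b, Relation.ReflTransGen
      (fun p q => p ∈ G.neighborSet x ∧ q ∈ G.neighborSet x ∧ p ≠ q ∧ ¬ G.Adj p q) a b →
      (d a x → d b x) ∧ (d x a → d x b) := by
    intro a b h
    induction h with
    | refl => exact ⟨id, id⟩
    | tail _ hpq ih =>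
      obtain ⟨_, hq, _, hnadj⟩ := hpq
      constructor
      · intro hax
        have hpx := ih.1 hax
        rcases htot _ _ hq trivial trivial with h1 | h2
        · exact absurd (hadj _ _ (htrans _ _ _ hpx h1)).1 hnadj
        · exact h2
      · intro hxa
        have hxp := ih.2 hxa
        rcases htot _ _ hq trivial trivial with h1 | h2
        · exact h1
        · exact absurd (hadj _ _ (htrans _ _ _ h2 hxp)).1 fun h => hnadj h.symm
  rcases htot x c0 (hsub hc0) trivial trivial with h | h
  · right; intro c hc; exact (key c0 c (hconn _ hc0 _ hc)).2 h
  · left; intro c hc; exact (key c0 c (hconn _ hc0 _ hc)).1 h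
end

section
/- Consider an LBFS ordering of a comparability graph G, a slice S with maximal subslices x, S_1, ..., S_k in order, with N(x) ∩ S ≠ ∅. Then in any transitive orientation of G, for all indices i, j with 1 < i < j, all edges between S_i and S_j are directed the same way. -/
section Helpers

variable {V : Type*} (G : SimpleGraph V) [DecidableRel G.Adj] (σ : ℕ → V) (n : ℕ)

lemma lexAppend {c : ℕ} {L1 L2 : List ℕ} (h : List.Lex (· < ·) L1 L2)
    (hL2 : ∀ a ∈ L2, c < a) (o1 o2 : List ℕ) (ho1 : ∀ a ∈ o1, a ≤ c) :
    List.Lex (· < ·) (L1 ++ o1) (L2 ++ o2) := by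
  induction h with
  | nil =>
      rename_i b l
      cases o1 with
      | nil => exact List.Lex.nil
      | cons e es =>
          exact List.Lex.rel (lt_of_le_of_lt (ho1 e (by simp)) (hL2 b (by simp)))
  | cons h ih =>
      exact List.Lex.cons (ih (fun x hx => hL2 x (List.mem_cons_of_mem _ hx)))
  | rel hab => exact List.Lex.rel hab

lemma lexPrefix : ∀ (P : List ℕ) (c : ℕ) (o : List ℕ), List.Lex (· < ·) P (P ++ c :: o)
  | [], _, _ => List.Lex.nil
  | _ :: P, c, o => List.Lex.cons (lexPrefix P c o)

lemma listLexTri : ∀ L1 L2 : List ℕ, L1 = L2 ∨ List.Lex (· < ·) L1 L2 ∨ List.Lex (· < ·) L2 L1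
  | [], [] => Or.inl rfl
  | [], _ :: _ => Or.inr (Or.inl List.Lex.nil)
  | _ :: _, [] => Or.inr (Or.inr List.Lex.nil)
  | a :: l1, b :: l2 => by
      rcases lt_trichotomy a b with h | h | h
      · exact Or.inr (Or.inl (List.Lex.rel h))
      · subst h
        rcases listLexTri l1 l2 with h | h | h
        · exact Or.inl (by rw [h])
        · exact Or.inr (Or.inl (List.Lex.cons h))
        · exact Or.inr (Or.inr (List.Lex.cons h))
      · exact Or.inr (Or.inr (List.Lex.rel h))

lemma lbl_succ (m : ℕ) (v : V) :
    lbfsLabel G σ n (m + 1) v =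
      lbfsLabel G σ n m v ++ (if G.Adj (σ m) v then [n - m] else []) := by
  unfold lbfsLabel
  rw [List.range_succ, List.filter_append, List.map_append]
  congr 1
  by_cases h : G.Adj (σ m) v <;> simp [h]

lemma lbl_elem {T : ℕ} {v : V} {a : ℕ} (ha : a ∈ lbfsLabel G σ n T v) :
    ∃ i, i < T ∧ a = n - i := by
  unfold lbfsLabel at ha
  simp only [List.mem_map, List.mem_filter, List.mem_range] at ha
  obtain ⟨i, ⟨hi, _⟩, rfl⟩ := ha
  exact ⟨i, hi, rfl⟩

lemma lbl_mem {T m : ℕ} (hT : T ≤ n) (hm : m < T) (v : V) :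
    (n - m) ∈ lbfsLabel G σ n T v ↔ G.Adj (σ m) v := by
  unfold lbfsLabel
  simp only [List.mem_map, List.mem_filter, List.mem_range, decide_eq_true_eq]
  constructor
  · rintro ⟨i, ⟨hi, hadj⟩, hEq⟩
    have : i = m := by omega
    subst this; exact hadj
  · intro h; exact ⟨m, ⟨hm, h⟩, rfl⟩

lemma lbl_eq_iff {T : ℕ} (hT : T ≤ n) (v w : V) :
    lbfsLabel G σ n T v = lbfsLabel G σ n T w ↔
      ∀ m < T, (G.Adj (σ m) v ↔ G.Adj (σ m) w) := by
  constructor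
  · intro h m hm
    rw [← lbl_mem G σ n hT hm v, ← lbl_mem G σ n hT hm w, h]
  · intro h
    unfold lbfsLabel
    congr 1
    exact List.filter_congr (fun m hm => by
      simp only [List.mem_range] at hm
      exact decide_eq_decide.mpr (h m hm))

lemma lex_step {m : ℕ} (hm : m < n) {v w : V}
    (h : List.Lex (· < ·) (lbfsLabel G σ n m v) (lbfsLabel G σ n m w)) :
    List.Lex (· < ·) (lbfsLabel G σ n (m + 1) v) (lbfsLabel G σ n (m + 1) w) := by
  rw [lbl_succ, lbl_succ]
  refine lexAppend (c := n - m) h ?_ _ _ ?_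
  · intro a ha
    obtain ⟨i, hi, rfl⟩ := lbl_elem G σ n ha
    omega
  · intro a ha
    by_cases hadj : G.Adj (σ m) v <;> simp [hadj] at ha
    omega

lemma lex_persist {s T : ℕ} (hT : T ≤ n) (hs : s ≤ T) {v w : V}
    (h : List.Lex (· < ·) (lbfsLabel G σ n s v) (lbfsLabel G σ n s w)) :
    List.Lex (· < ·) (lbfsLabel G σ n T v) (lbfsLabel G σ n T w) := by
  induction T, hs using Nat.le_induction with
  | base => exact h
  | succ T hsT ih => exact lex_step G σ n (by omega) (ih (by omega))

end Helpers

section SliceLemmas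

variable {V : Type*} {G : SimpleGraph V} [DecidableRel G.Adj] {σ : ℕ → V} {n : ℕ}
variable (hL : IsLBFS G n σ)
include hL

lemma sigma_inj {m m' : ℕ} (hm : m < n) (hm' : m' < n) (h : σ m = σ m') : m = m' :=
  hL.1.2.1 (Set.mem_Iio.mpr hm) (Set.mem_Iio.mpr hm') h

lemma self_mem_slice {T : ℕ} (hT : T < n) : σ T ∈ sliceAt G σ n T :=
  ⟨fun m hm h => (Nat.ne_of_lt hm) (sigma_inj hL (hm.trans hT) hT h), rfl⟩

omit hL in
lemma slice_pattern {T : ℕ} (hT : T ≤ n) {v w : V}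
    (hv : v ∈ sliceAt G σ n T) (hw : w ∈ sliceAt G σ n T) :
    ∀ m < T, (G.Adj (σ m) v ↔ G.Adj (σ m) w) :=
  (lbl_eq_iff G σ n hT v w).mp (hv.2.trans hw.2.symm)

omit hL in
lemma slice_mono {w w' : ℕ} (hw' : w' ≤ n) (hle : w ≤ w') {v : V}
    (hv' : v ∈ sliceAt G σ n w') (hv : v ∈ sliceAt G σ n w) :
    sliceAt G σ n w' ⊆ sliceAt G σ n w := by
  intro z hz
  refine ⟨fun m hm => hz.1 m (lt_of_lt_of_le hm hle), ?_⟩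
  have hp := slice_pattern (G := G) hw' hz hv'
  have : lbfsLabel G σ n w z = lbfsLabel G σ n w v :=
    (lbl_eq_iff G σ n (le_trans hle hw') z v).mpr
      (fun m hm => hp m (lt_of_lt_of_le hm hle))
  exact this.trans hv.2

lemma max_label {T : ℕ} (hT : T < n) {v : V} (hun : ∀ m < T, σ m ≠ v)
    (hne : lbfsLabel G σ n T v ≠ lbfsLabel G σ n T (σ T)) :
    List.Lex (· < ·) (lbfsLabel G σ n T v) (lbfsLabel G σ n T (σ T)) := by
  rcases listLexTri (lbfsLabel G σ n T v) (lbfsLabel G σ n T (σ T)) with h | h | h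
  · exact absurd h hne
  · exact h
  · exact absurd h (hL.2 T hT v hun)

variable {t k : ℕ} {u : ℕ → ℕ}

lemma subslice_disj (hu : MaxSubsliceEnum G σ n t k u) {i j : ℕ}
    (h1 : 1 ≤ i) (hij : i < j) (hjk : j ≤ k) {v : V}
    (hvi : v ∈ sliceAt G σ n (u i)) (hvj : v ∈ sliceAt G σ n (u j)) : False := by
  have hin : u i < n := (hu.1 i h1 (by omega)).1
  have hjn : u j < n := (hu.1 j (by omega) hjk).1
  have huij : u i < u j := hu.2.1 i j h1 hij hjk
  have hsub : sliceAt G σ n (u j) ⊆ sliceAt G σ n (u i) :=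
    slice_mono (le_of_lt hjn) (le_of_lt huij) hvj hvi
  have hne : σ (u i) ∉ sliceAt G σ n (u j) := fun h => h.1 (u i) huij rfl
  have hss : sliceAt G σ n (u j) ⊂ sliceAt G σ n (u i) :=
    ⟨hsub, fun hsup => hne (hsup (self_mem_slice hL hin))⟩
  exact (hu.1 j (by omega) hjk).2.2 (u i) hin ⟨hss, (hu.1 i h1 (by omega)).2.1⟩

lemma w1_eq (ht : t < n) (ht1 : t + 1 < n)
    (hxz : ∃ z, G.Adj (σ t) z ∧ z ∈ sliceAt G σ n t) :
    sliceAt G σ n (t + 1) = {v | G.Adj (σ t) v} ∩ sliceAt G σ n t := by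
  obtain ⟨z, hadj, hzS⟩ := hxz
  have hzu : ∀ m < t + 1, σ m ≠ z := by
    intro m hm
    rcases Nat.lt_or_ge m t with h | h
    · exact hzS.1 m h
    · have hmt : m = t := by omega
      subst hmt
      intro hEq
      rw [hEq] at hadj
      exact G.irrefl hadj
  have hs1u_t : ∀ m < t, σ m ≠ σ (t + 1) := by
    intro m hm h
    have := sigma_inj hL (by omega) ht1 h
    omega
  have hs1 : G.Adj (σ t) (σ (t + 1)) ∧ σ (t + 1) ∈ sliceAt G σ n t := by
    by_contra hc
    apply hL.2 (t + 1) ht1 z hzu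
    have hlz1 : lbfsLabel G σ n (t + 1) z = lbfsLabel G σ n t (σ t) ++ [n - t] := by
      rw [lbl_succ]
      simp only [hadj, if_true]
      rw [hzS.2]
    by_cases hm : lbfsLabel G σ n t (σ (t + 1)) = lbfsLabel G σ n t (σ t)
    · have hnadj : ¬ G.Adj (σ t) (σ (t + 1)) := fun ha => hc ⟨ha, hs1u_t, hm⟩
      have h1 : lbfsLabel G σ n (t + 1) (σ (t + 1)) = lbfsLabel G σ n t (σ t) := by
        rw [lbl_succ]
        simp only [hnadj, if_false]
        simpa using hm
      rw [h1, hlz1]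
      exact lexPrefix _ _ _
    · have hlt := max_label hL ht hs1u_t hm
      have hlt2 : List.Lex (· < ·) (lbfsLabel G σ n t (σ (t + 1))) (lbfsLabel G σ n t z) := by
        rw [hzS.2]; exact hlt
      exact lex_step G σ n ht hlt2
  ext v
  constructor
  · intro hv
    have hlab : lbfsLabel G σ n (t + 1) v = lbfsLabel G σ n t (σ t) ++ [n - t] := by
      rw [hv.2, lbl_succ]
      simp only [hs1.1, if_true]
      rw [hs1.2.2]
    have hvadj : G.Adj (σ t) v := by
      by_contra hnadj
      have : lbfsLabel G σ n t v = lbfsLabel G σ n t (σ t) ++ [n - t] := by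
        rw [← hlab, lbl_succ]
        simp [hnadj]
      have hmem : (n - t) ∈ lbfsLabel G σ n t v := by
        rw [this]; simp
      obtain ⟨i, hi, hieq⟩ := lbl_elem G σ n hmem
      omega
    have hlabt : lbfsLabel G σ n t v = lbfsLabel G σ n t (σ t) := by
      have h2 : lbfsLabel G σ n t v ++ [n - t] = lbfsLabel G σ n t (σ t) ++ [n - t] := by
        rw [← hlab, lbl_succ]
        simp [hvadj]
      exact List.append_cancel_right h2
    exact ⟨hvadj, fun m hm => hv.1 m (by omega), hlabt⟩
  · rintro ⟨hvadj, hvt⟩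
    replace hvadj : G.Adj (σ t) v := hvadj
    have hvu : ∀ m < t + 1, σ m ≠ v := by
      intro m hm
      rcases Nat.lt_or_ge m t with h | h
      · exact hvt.1 m h
      · have hmt : m = t := by omega
        subst hmt
        intro hEq
        rw [← hEq] at hvadj
        exact G.irrefl hvadj
    refine ⟨hvu, ?_⟩
    rw [lbl_succ, lbl_succ]
    simp only [hvadj, hs1.1, if_true]
    rw [hvt.2, hs1.2.2]

lemma su1_eq (ht : t < n) (hu : MaxSubsliceEnum G σ n t k u) (hk : 1 ≤ k)
    (hxz : ∃ z, G.Adj (σ t) z ∧ z ∈ sliceAt G σ n t) :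
    sliceAt G σ n (u 1) = {v | G.Adj (σ t) v} ∩ sliceAt G σ n t := by
  have hu1n : u 1 < n := (hu.1 1 le_rfl hk).1
  have htu1 : t < u 1 := hu.2.2.1 1 le_rfl hk
  have ht1 : t + 1 < n := by omega
  have hW := w1_eq hL ht ht1 hxz
  have hmax : IsMaxSubsliceAt G σ n t (t + 1) := by
    refine ⟨ht1, ⟨?_, ?_⟩, ?_⟩
    · rw [hW]; exact Set.inter_subset_right
    · intro hsup
      have hx_in := hsup (self_mem_slice hL ht)
      rw [hW] at hx_in
      exact G.irrefl hx_in.1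
    · rintro w hwn ⟨h1, h2⟩
      obtain ⟨v, hvw, hvn1⟩ := Set.exists_of_ssubset h1
      have hs1W : σ (t + 1) ∈ sliceAt G σ n (t + 1) := self_mem_slice hL ht1
      have hs1w : σ (t + 1) ∈ sliceAt G σ n w := h1.1 hs1W
      have hs1adj : G.Adj (σ t) (σ (t + 1)) := by
        rw [hW] at hs1W; exact hs1W.1
      have hs1t : σ (t + 1) ∈ sliceAt G σ n t := by
        rw [hW] at hs1W; exact hs1W.2
      rcases Nat.lt_or_ge t w with htw | hwt
      · have hpat := slice_pattern (G := G) (le_of_lt hwn) hvw hs1w t htw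
        have hadj_v : G.Adj (σ t) v := hpat.mpr hs1adj
        exact hvn1 (by rw [hW]; exact ⟨hadj_v, h2.1 hvw⟩)
      · have : sliceAt G σ n t ⊆ sliceAt G σ n w :=
          slice_mono (le_of_lt ht) hwt hs1t hs1w
        exact h2.2 this
  obtain ⟨p, hp1, hpk, hpeq⟩ := hu.2.2.2 (t + 1) ht1 hmax
  by_cases hp : p = 1
  · subst hp
    rw [← hpeq, hW]
  · exfalso
    have hp2 : 1 < p := by omega
    have hz0 : σ (u 1) ∈ sliceAt G σ n (u 1) := self_mem_slice hL hu1n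
    have hz0t : σ (u 1) ∈ sliceAt G σ n t := (hu.1 1 le_rfl hk).2.1.1 hz0
    have hz0nW : σ (u 1) ∉ sliceAt G σ n (t + 1) := by
      intro h
      rw [hpeq] at h
      exact subslice_disj hL hu le_rfl hp2 hpk hz0 h
    have hz0nadj : ¬ G.Adj (σ t) (σ (u 1)) := fun h => hz0nW (by rw [hW]; exact ⟨h, hz0t⟩)
    have hupn : u p < n := (hu.1 p (by omega) hpk).1
    have hz1 : σ (u p) ∈ sliceAt G σ n (u p) := self_mem_slice hL hupn
    have hz1W : σ (u p) ∈ sliceAt G σ n (t + 1) := by rw [hpeq]; exact hz1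
    have hz1adj : G.Adj (σ t) (σ (u p)) := by rw [hW] at hz1W; exact hz1W.1
    have hz1t : σ (u p) ∈ sliceAt G σ n t := by rw [hW] at hz1W; exact hz1W.2
    have hu1p : u 1 < u p := hu.2.1 1 p le_rfl hp2 hpk
    have hz1u : ∀ m < u 1, σ m ≠ σ (u p) := fun m hm => hz1.1 m (by omega)
    have hP : lbfsLabel G σ n t (σ (u 1)) = lbfsLabel G σ n t (σ (u p)) :=
      hz0t.2.trans hz1t.2.symm
    have hstep : List.Lex (· < ·) (lbfsLabel G σ n (t + 1) (σ (u 1)))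
        (lbfsLabel G σ n (t + 1) (σ (u p))) := by
      rw [lbl_succ, lbl_succ]
      simp only [hz0nadj, if_false, hz1adj, if_true, List.append_nil]
      rw [hP]
      exact lexPrefix _ _ _
    have hfin := lex_persist G σ n (le_of_lt hu1n) (by omega) hstep
    exact hL.2 (u 1) hu1n (σ (u p)) hz1u hfin

lemma subslice_nonadj (ht : t < n) (hu : MaxSubsliceEnum G σ n t k u)
    (hxz : ∃ z, G.Adj (σ t) z ∧ z ∈ sliceAt G σ n t) {i : ℕ} (hi2 : 1 < i) (hik : i ≤ k)
    {v : V} (hv : v ∈ sliceAt G σ n (u i)) : ¬ G.Adj (σ t) v := by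
  intro hadj
  have hvt : v ∈ sliceAt G σ n t := (hu.1 i (by omega) hik).2.1.1 hv
  have hv1 : v ∈ sliceAt G σ n (u 1) := by
    rw [su1_eq hL ht hu (by omega) hxz]
    exact ⟨hadj, hvt⟩
  exact subslice_disj hL hu le_rfl hi2 hik hv1 hv

end SliceLemmas

/-- if `N(x) ∩ S ≠ ∅` then, in any transitive orientation, for
`1 < i < j` all edges between the maximal subslices `S_i` and `S_j` are directed the
same way. -/
theorem subslice_pair_edges_same_direction {V : Type*} (G : SimpleGraph V)
    [DecidableRel G.Adj] (n : ℕ) (σ : ℕ → V) (hL : IsLBFS G n σ)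
    (d : V → V → Prop) (hd : IsTransOrientationOn G Set.univ d)
    (t : ℕ) (ht : t < n) (k : ℕ) (u : ℕ → ℕ) (hu : MaxSubsliceEnum G σ n t k u)
    (hx : G.neighborSet (σ t) ∩ sliceAt G σ n t ≠ ∅) :
    ∀ i j, 1 < i → i < j → j ≤ k →
      (∀ a ∈ sliceAt G σ n (u i), ∀ b ∈ sliceAt G σ n (u j), G.Adj a b → d a b) ∨
      (∀ a ∈ sliceAt G σ n (u i), ∀ b ∈ sliceAt G σ n (u j), G.Adj a b → d b a) := by
  classical
  have hxz : ∃ z, G.Adj (σ t) z ∧ z ∈ sliceAt G σ n t := by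
    obtain ⟨z, hz⟩ := Set.nonempty_iff_ne_empty.mpr hx
    exact ⟨z, hz.1, hz.2⟩
  intro i
  induction i using Nat.strong_induction_on with
  | _ i IH =>
  intro j h1i hij hjk
  have hik : i ≤ k := by omega
  have hui := hu.1 i (by omega) hik
  have huj := hu.1 j (by omega) hjk
  have hui_n : u i < n := hui.1
  have huj_n : u j < n := huj.1
  have huij : u i < u j := hu.2.1 i j (by omega) hij hjk
  have htui : t < u i := hu.2.2.1 i (by omega) hik
  have ha0 : σ (u i) ∈ sliceAt G σ n (u i) := self_mem_slice hL hui_n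
  have hb0 : σ (u j) ∈ sliceAt G σ n (u j) := self_mem_slice hL huj_n
  have ha0t : σ (u i) ∈ sliceAt G σ n t := hui.2.1.1 ha0
  have hb0t : σ (u j) ∈ sliceAt G σ n t := huj.2.1.1 hb0
  have hb0u : ∀ m < u i, σ m ≠ σ (u j) := fun m hm => hb0.1 m (by omega)
  have hlab_ne : lbfsLabel G σ n (u i) (σ (u j)) ≠ lbfsLabel G σ n (u i) (σ (u i)) := by
    intro hEq
    exact subslice_disj hL hu (by omega) hij hjk (⟨hb0u, hEq⟩ : σ (u j) ∈ sliceAt G σ n (u i)) hb0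
  have hPex : ∃ m, m < u i ∧ ¬ (G.Adj (σ m) (σ (u i)) ↔ G.Adj (σ m) (σ (u j))) := by
    by_contra hc
    push_neg at hc
    exact hlab_ne ((lbl_eq_iff G σ n (le_of_lt hui_n) _ _).mpr
      (fun m hm => ((hc m hm).symm)))
  set q := Nat.find hPex with hqdef
  have hq := Nat.find_spec hPex
  rw [← hqdef] at hq
  have hqmin : ∀ m, m < q → ¬ (m < u i ∧ ¬ (G.Adj (σ m) (σ (u i)) ↔ G.Adj (σ m) (σ (u j)))) :=
    fun m hm => Nat.find_min hPex hm
  have hq_lt : q < u i := hq.1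
  have hq_diff := hq.2
  have hq_ge_t : t ≤ q := by
    by_contra hc
    push_neg at hc
    exact hq_diff (slice_pattern (G := G) (le_of_lt ht) ha0t hb0t q hc)
  have hq_ne_t : q ≠ t := by
    intro hEq
    apply hq_diff
    rw [hEq]
    constructor
    · intro h; exact absurd h (subslice_nonadj hL ht hu hxz h1i hik ha0)
    · intro h; exact absurd h (subslice_nonadj hL ht hu hxz (by omega : 1 < j) hjk hb0)
  have hq_gt_t : t < q := by omega
  have hq_n : q < n := by omega
  have hPq : lbfsLabel G σ n q (σ (u i)) = lbfsLabel G σ n q (σ (u j)) := by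
    refine (lbl_eq_iff G σ n (by omega) _ _).mpr ?_
    intro m hm
    by_contra hc
    exact hqmin m hm ⟨by omega, hc⟩
  have hqa : G.Adj (σ q) (σ (u i)) := by
    by_contra hna
    have hnb : G.Adj (σ q) (σ (u j)) := by
      by_contra hnb
      exact hq_diff (iff_of_false hna hnb)
    have hstep : List.Lex (· < ·) (lbfsLabel G σ n (q + 1) (σ (u i)))
        (lbfsLabel G σ n (q + 1) (σ (u j))) := by
      rw [lbl_succ, lbl_succ]
      simp only [hna, if_false, hnb, if_true, List.append_nil]
      rw [hPq]
      exact lexPrefix _ _ _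
    have hfin := lex_persist G σ n (le_of_lt hui_n) (by omega) hstep
    exact hL.2 (u i) hui_n (σ (u j)) hb0u hfin
  have hqb : ¬ G.Adj (σ q) (σ (u j)) := fun h => hq_diff (iff_of_true hqa h)
  have huniv : ∀ a ∈ sliceAt G σ n (u i), G.Adj (σ q) a := by
    intro a ha
    exact (slice_pattern (G := G) (le_of_lt hui_n) ha ha0 q hq_lt).mpr hqa
  have hiso : ∀ b ∈ sliceAt G σ n (u j), ¬ G.Adj (σ q) b := by
    intro b hb h
    exact hqb ((slice_pattern (G := G) (le_of_lt huj_n) hb hb0 q (by omega)).mp h)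
  have hy_unexp : ∀ m < t, σ m ≠ σ q := by
    intro m hm h
    have := sigma_inj hL (by omega) hq_n h
    omega
  have ha0_unexp_q : ∀ m < q, σ m ≠ σ (u i) := fun m hm => ha0.1 m (by omega)
  have hySt : σ q ∈ sliceAt G σ n t := by
    refine ⟨hy_unexp, ?_⟩
    by_contra hne
    have hlt := max_label hL ht hy_unexp hne
    have hlt2 : List.Lex (· < ·) (lbfsLabel G σ n t (σ q)) (lbfsLabel G σ n t (σ (u i))) := by
      rw [ha0t.2]; exact hlt
    have hfin := lex_persist G σ n (le_of_lt hq_n) (le_of_lt hq_gt_t) hlt2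
    exact hL.2 q hq_n (σ (u i)) ha0_unexp_q hfin
  have hdich : (∀ a ∈ sliceAt G σ n (u i), d (σ q) a) ∨
      (∀ a ∈ sliceAt G σ n (u i), d a (σ q)) := by
    by_cases hxy : G.Adj (σ t) (σ q)
    · rcases hd.2.1 (σ t) (σ q) hxy (Set.mem_univ _) (Set.mem_univ _) with hdxy | hdyx
      · right
        intro a ha
        have hna : ¬ G.Adj (σ t) a := subslice_nonadj hL ht hu hxz h1i hik ha
        rcases hd.2.1 (σ q) a (huniv a ha) (Set.mem_univ _) (Set.mem_univ _) with h | h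
        · exact absurd (hd.1 _ _ (hd.2.2.2 _ _ _ hdxy h)).1 hna
        · exact h
      · left
        intro a ha
        have hna : ¬ G.Adj (σ t) a := subslice_nonadj hL ht hu hxz h1i hik ha
        rcases hd.2.1 (σ q) a (huniv a ha) (Set.mem_univ _) (Set.mem_univ _) with h | h
        · exact h
        · exact absurd (G.adj_symm (hd.1 _ _ (hd.2.2.2 _ _ _ h hdyx)).1) hna
    · have hyq : σ q ∈ sliceAt G σ n q := self_mem_slice hL hq_n
      have hSqSt : sliceAt G σ n q ⊆ sliceAt G σ n t :=
        slice_mono (le_of_lt hq_n) (le_of_lt hq_gt_t) hyq hySt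
      have hxnq : σ t ∉ sliceAt G σ n q := fun h => h.1 t hq_gt_t rfl
      have hq_ss : sliceAt G σ n q ⊂ sliceAt G σ n t :=
        ⟨hSqSt, fun hsup => hxnq (hsup (self_mem_slice hL ht))⟩
      have hVfin : Finite V := by
        rw [← Set.finite_univ_iff]
        exact Set.Finite.subset ((Set.finite_Iio n).image σ) hL.1.2.2
      set F : Finset ℕ := (Finset.range n).filter
          (fun w => sliceAt G σ n q ⊆ sliceAt G σ n w ∧ sliceAt G σ n w ⊂ sliceAt G σ n t)
        with hF
      have hqF : q ∈ F := by
        rw [hF, Finset.mem_filter, Finset.mem_range]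
        exact ⟨hq_n, Set.Subset.refl _, hq_ss⟩
      obtain ⟨w0, hw0F, hw0max⟩ :=
        F.exists_max_image (fun w => (sliceAt G σ n w).ncard) ⟨q, hqF⟩
      rw [hF, Finset.mem_filter, Finset.mem_range] at hw0F
      have hw0n : w0 < n := hw0F.1
      have hmaxsub : IsMaxSubsliceAt G σ n t w0 := by
        refine ⟨hw0n, hw0F.2.2, ?_⟩
        rintro w hwn ⟨h1, h2⟩
        have hwF : w ∈ F := by
          rw [hF, Finset.mem_filter, Finset.mem_range]
          exact ⟨hwn, hw0F.2.1.trans h1.subset, h2⟩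
        have hle := hw0max w hwF
        have hlt := Set.ncard_lt_ncard h1 (Set.toFinite _)
        omega
      obtain ⟨l, hl1, hlk, hleq⟩ := hu.2.2.2 w0 hw0n hmaxsub
      have hySl : σ q ∈ sliceAt G σ n (u l) := by
        rw [← hleq]
        exact hw0F.2.1 hyq
      have hli : l < i := by
        rcases lt_trichotomy l i with h | h | h
        · exact h
        · exfalso; subst h; exact hySl.1 q hq_lt rfl
        · exfalso
          have : u i < u l := hu.2.1 i l (by omega) h hlk
          exact hySl.1 q (by omega) rfl
      have hl2 : 1 < l := by
        by_contra hcon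
        have hl_eq : l = 1 := by omega
        subst hl_eq
        apply hxy
        have hmem := hySl
        rw [su1_eq hL ht hu (by omega) hxz] at hmem
        exact hmem.1
      rcases IH l hli i hl2 hli hik with hdir | hdir
      · left
        intro a ha
        exact hdir (σ q) hySl a ha (huniv a ha)
      · right
        intro a ha
        exact hdir (σ q) hySl a ha (huniv a ha)
  rcases hdich with hA | hB
  · right
    intro a ha b hb hab
    rcases hd.2.1 a b hab (Set.mem_univ _) (Set.mem_univ _) with h | h
    · exact absurd (hd.1 _ _ (hd.2.2.2 _ _ _ (hA a ha) h)).1 (hiso b hb)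
    · exact h
  · left
    intro a ha b hb hab
    rcases hd.2.1 a b hab (Set.mem_univ _) (Set.mem_univ _) with h | h
    · exact h
    · exact absurd (G.adj_symm (hd.1 _ _ (hd.2.2.2 _ _ _ h (hB a ha))).1) (hiso b hb)
end

section
/- Let G be a prime comparability graph with a source vertex x (a vertex all of whose incident edges are directed away from it in some fixed transitive orientation). Then the ordered partition ({x}, V(G) \ {x}) is consistent with a linear extension, and if an ordered partition P consistent with a linear extension is refined by a pivot operation on a vertex p (splitting each class Q not containing p into Q \ N(p) followed by Q ∩ N(p) if Q is after p's class, and Q ∩ N(p) followed by Q \ N(p) if Q is before p's class), the result is again consistent with a linear extension. -/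
/-- `r` is a linear extension of the transitive orientation `d` of `G`: a strict total
order on the vertices such that each edge `ab` is directed toward `b` iff `a` precedes `b`. -/
def IsLinearExtension {V : Type*} (G : SimpleGraph V) (d r : V → V → Prop) : Prop :=
  (∀ a b c, r a b → r b c → r a c) ∧ (∀ a, ¬ r a a) ∧
  (∀ a b, a ≠ b → r a b ∨ r b a) ∧
  (∀ a b, G.Adj a b → (d a b ↔ r a b))

/-- The ordered partition (list of classes) `L` is consistent with a linear extension of
the orientation `d`: some linear extension puts every vertex of an earlier class before
every vertex of a later class. -/
def ConsistentLE {V : Type*} (G : SimpleGraph V) (d : V → V → Prop)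
    (L : List (Set V)) : Prop :=
  ∃ r : V → V → Prop, IsLinearExtension G d r ∧
    ∀ i j, i < j → j < L.length → ∀ a ∈ L.getD i ∅, ∀ b ∈ L.getD j ∅, r a b

open Classical in
/-- The pivot refinement on pivot `p`, whose class is at position `ip` in `L`: every
class `Q` at a position `j ≠ ip` that is split by `N(p)` is replaced by `Q \ N(p)`
followed by `Q ∩ N(p)` if `Q` comes after `p`'s class, and by `Q ∩ N(p)` followed by
`Q \ N(p)` if it comes before. -/
noncomputable def pivotRefine {V : Type*} (G : SimpleGraph V) (p : V)
    (L : List (Set V)) (ip : ℕ) : List (Set V) :=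
  ((L.zipIdx.map Prod.swap).map (fun jQ =>
    if jQ.1 = ip then [jQ.2]
    else if (jQ.2 ∩ G.neighborSet p).Nonempty ∧ (jQ.2 \ G.neighborSet p).Nonempty then
      (if ip < jQ.1 then [jQ.2 \ G.neighborSet p, jQ.2 ∩ G.neighborSet p]
       else [jQ.2 ∩ G.neighborSet p, jQ.2 \ G.neighborSet p])
    else [jQ.2])).flatten

/-!
An ordered partition is consistent with a linear extension iff no class contains a vertex
equal to, or pointing by an arc into, a vertex of an earlier class: then the orientation
together with the order of the classes is acyclic, and Szpilrajn's theorem completes it to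
a linear extension. A pivot split keeps this condition between classes, since the pieces
are subsets of the old classes. Inside a class `Q` after the class of `p`, every
`b ∈ Q ∩ N(p)` satisfies `p → b`, so an arc `b → a` with `a ∈ Q \ N(p)` would give
`p → a` by transitivity, making `a` a neighbour of `p`; the case of a class before `p` is
symmetric.
-/

open Relation

section

variable {V : Type*} {G : SimpleGraph V} {d : V → V → Prop}

def CanPrecede (d : V → V → Prop) (A B : Set V) : Prop :=
  ∀ a ∈ A, ∀ b ∈ B, ¬ ReflGen d b a

theorem CanPrecede.mono {A A' B B' : Set V} (h : CanPrecede d A B) (hA : A' ⊆ A)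
    (hB : B' ⊆ B) : CanPrecede d A' B' :=
  fun a ha b hb => h a (hA ha) b (hB hb)

namespace IsTransOrientationOn

theorem adj (hd : IsTransOrientationOn G Set.univ d) {a b : V} (h : d a b) : G.Adj a b :=
  (hd.1 a b h).1

theorem rel_of_adj_of_not_rel (hd : IsTransOrientationOn G Set.univ d) {a b : V}
    (hab : G.Adj a b) (hba : ¬ d b a) : d a b :=
  (hd.2.1 a b hab trivial trivial).resolve_right hba

theorem reflGen_trans (hd : IsTransOrientationOn G Set.univ d) {a b c : V}
    (hab : ReflGen d a b) (hbc : ReflGen d b c) : ReflGen d a c :=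
  haveI : IsTrans V d := ⟨hd.2.2.2⟩
  _root_.trans hab hbc

theorem exists_linearExtension (hd : IsTransOrientationOn G Set.univ d)
    (D : V → V → Prop) [IsStrictOrder V D] (hdD : ∀ a b, d a b → D a b) :
    ∃ r, IsLinearExtension G d r ∧ ∀ a b, D a b → r a b := by
  let _ := partialOrderOfSO D
  let r : V → V → Prop := fun a b => toLinearExtension a < toLinearExtension b
  have hDr : ∀ a b, D a b → r a b := fun a b h =>
    (toLinearExtension.monotone (Or.inr h)).lt_of_ne
      fun e => irrefl_of D b (by rwa [show a = b from e] at h)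
  refine ⟨r, ⟨fun _ _ _ => lt_trans, fun _ => lt_irrefl _,
    fun _ _ h => lt_or_gt_of_ne (α := LinearExtension V) h,
    fun a b hab => ⟨fun h => hDr a b (hdD a b h), fun hr => ?_⟩⟩, hDr⟩
  exact hd.rel_of_adj_of_not_rel hab fun hba => lt_asymm hr (hDr b a (hdD b a hba))

end IsTransOrientationOn

theorem List.lt_length_of_mem_getD {L : List (Set V)} {i : ℕ} {a : V} (ha : a ∈ L.getD i ∅) :
    i < L.length := by
  by_contra h
  rwa [List.getD_eq_default _ _ (not_lt.1 h)] at ha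

theorem List.Pairwise.index_le_of_reflGen {L : List (Set V)} (hL : L.Pairwise (CanPrecede d))
    {i j : ℕ} {a b : V} (ha : a ∈ L.getD i ∅) (hb : b ∈ L.getD j ∅)
    (hab : ReflGen d a b) : i ≤ j := by
  have hi := List.lt_length_of_mem_getD ha
  have hj := List.lt_length_of_mem_getD hb
  rw [List.getD_eq_getElem _ _ hi] at ha
  rw [List.getD_eq_getElem _ _ hj] at hb
  by_contra hji
  exact List.pairwise_iff_getElem.1 hL j i hj hi (not_le.1 hji) b hb a ha hab

theorem consistentLE_iff_pairwise (hd : IsTransOrientationOn G Set.univ d)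
    {L : List (Set V)} : ConsistentLE G d L ↔ L.Pairwise (CanPrecede d) := by
  constructor
  · rintro ⟨r, ⟨hr_trans, hr_irrefl, -, hr_adj⟩, hr⟩
    refine List.pairwise_iff_getElem.2 fun i j hi hj hij a ha b hb hba => ?_
    have hrab : r a b := hr i j hij hj a (by rwa [List.getD_eq_getElem]) b
      (by rwa [List.getD_eq_getElem])
    cases hba with
    | refl => exact hr_irrefl a hrab
    | single hba => exact hr_irrefl a (hr_trans _ _ _ hrab ((hr_adj b a (hd.adj hba)).1 hba))
  · intro hL
    -- composing with `d` on both sides makes the class order transitive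
    let D : V → V → Prop := fun u v => d u v ∨ ∃ i j, i < j ∧
      (∃ a ∈ L.getD i ∅, ReflGen d u a) ∧ ∃ b ∈ L.getD j ∅, ReflGen d b v
    have : IsStrictOrder V D :=
      { irrefl := by
          rintro u (huu | ⟨i, j, hij, ⟨a, ha, hua⟩, b, hb, hbu⟩)
          · exact hd.2.2.1 u u huu huu
          · have := hL.index_le_of_reflGen hb ha (hd.reflGen_trans hbu hua)
            omega
        trans := by
          rintro u v w (huv | ⟨i, j, hij, hu, b, hb, hbv⟩)
            (hvw | ⟨k, l, hkl, ⟨a, ha, hva⟩, hw⟩)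
          · exact Or.inl (hd.2.2.2 u v w huv hvw)
          · exact Or.inr ⟨k, l, hkl, ⟨a, ha, hd.reflGen_trans (.single huv) hva⟩, hw⟩
          · exact Or.inr ⟨i, j, hij, hu, b, hb, hd.reflGen_trans hbv (.single hvw)⟩
          · have := hL.index_le_of_reflGen hb ha (hd.reflGen_trans hbv hva)
            exact Or.inr ⟨i, l, by omega, hu, hw⟩ }
    obtain ⟨r, hr, hDr⟩ := hd.exists_linearExtension D fun a b h => Or.inl h
    exact ⟨r, hr, fun i j hij _ a ha b hb =>
      hDr a b (Or.inr ⟨i, j, hij, ⟨a, ha, .refl⟩, b, hb, .refl⟩)⟩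

theorem consistentLE_source_split (hd : IsTransOrientationOn G Set.univ d) {x : V}
    (hx : ∀ b, G.Adj x b → d x b) : ConsistentLE G d [{x}, Set.univ \ {x}] := by
  refine (consistentLE_iff_pairwise hd).2 (List.pairwise_pair.2 ?_)
  rintro a rfl b ⟨-, hbx⟩ hba
  cases hba with
  | refl => exact hbx rfl
  | single hba => exact hd.2.2.1 b a hba (hx b (hd.adj hba).symm)

open Classical in
noncomputable def pivotSplit (G : SimpleGraph V) (p : V) (ip : ℕ) (jQ : ℕ × Set V) :
    List (Set V) :=
  if jQ.1 = ip then [jQ.2]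
  else if (jQ.2 ∩ G.neighborSet p).Nonempty ∧ (jQ.2 \ G.neighborSet p).Nonempty then
    (if ip < jQ.1 then [jQ.2 \ G.neighborSet p, jQ.2 ∩ G.neighborSet p]
     else [jQ.2 ∩ G.neighborSet p, jQ.2 \ G.neighborSet p])
  else [jQ.2]

theorem pivotRefine_eq_flatten (G : SimpleGraph V) (p : V) (L : List (Set V)) (ip : ℕ) :
    pivotRefine G p L ip = ((L.zipIdx.map Prod.swap).map (pivotSplit G p ip)).flatten :=
  rfl

theorem subset_of_mem_pivotSplit {p : V} {ip : ℕ} {jQ : ℕ × Set V} {Q' : Set V}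
    (h : Q' ∈ pivotSplit G p ip jQ) : Q' ⊆ jQ.2 := by
  unfold pivotSplit at h
  split_ifs at h <;> simp only [List.mem_cons, List.not_mem_nil, or_false] at h <;>
    rcases h with rfl | rfl <;> simp [Set.inter_subset_left]

theorem pivotSplit_pairwise (hd : IsTransOrientationOn G Set.univ d) {p : V} {ip j : ℕ}
    {Q : Set V} (hafter : ip < j → ∀ b ∈ Q, ¬ d b p)
    (hbefore : j < ip → ∀ a ∈ Q, ¬ d p a) :
    (pivotSplit G p ip (j, Q)).Pairwise (CanPrecede d) := by
  unfold pivotSplit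
  split_ifs with hjp _ hlt
  · exact List.pairwise_singleton _ _
  · rw [List.pairwise_pair]
    rintro a ⟨-, haN⟩ b ⟨hbQ, hbN⟩ hba
    cases hba with
    | refl => exact haN hbN
    | single hba =>
      have hpb : d p b := hd.rel_of_adj_of_not_rel hbN (hafter hlt b hbQ)
      exact haN (hd.adj (hd.2.2.2 p b a hpb hba))
  · rw [List.pairwise_pair]
    rintro a ⟨haQ, haN⟩ b ⟨-, hbN⟩ hba
    cases hba with
    | refl => exact hbN haN
    | single hba =>
      have hap : d a p := hd.rel_of_adj_of_not_rel haN.symm (hbefore (by omega) a haQ)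
      exact hbN (hd.adj (hd.2.2.2 b a p hba hap)).symm
  · exact List.pairwise_singleton _ _

theorem pivotRefine_pairwise (hd : IsTransOrientationOn G Set.univ d) {L : List (Set V)}
    {p : V} {ip : ℕ} (hL : L.Pairwise (CanPrecede d)) (hp : p ∈ L.getD ip ∅) :
    (pivotRefine G p L ip).Pairwise (CanPrecede d) := by
  have hip := List.lt_length_of_mem_getD hp
  rw [List.getD_eq_getElem _ _ hip] at hp
  rw [pivotRefine_eq_flatten, List.pairwise_flatten, List.pairwise_map]
  constructor
  · simp only [List.mem_map]
    rintro _ ⟨_, ⟨⟨Q, j⟩, hjQ, rfl⟩, rfl⟩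
    obtain ⟨hj, hQ⟩ := List.getElem?_eq_some_iff.1 (List.mem_zipIdx_iff_getElem?.1 hjQ)
    have hL' := List.pairwise_iff_getElem.1 hL
    refine pivotSplit_pairwise hd (fun hlt b hb hbp => ?_) (fun hlt a ha hpa => ?_)
    · exact hL' ip j hip hj hlt p hp b (hQ ▸ hb) (.single hbp)
    · exact hL' j ip hj hip hlt a (hQ ▸ ha) p hp (.single hpa)
  · have hL' : (L.zipIdx.map Prod.swap).Pairwise fun x y => CanPrecede d x.2 y.2 := by
      rw [← List.pairwise_map, List.map_map]
      simpa [Function.comp_def] using hL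
    refine hL'.imp fun h A hA B hB => ?_
    exact h.mono (subset_of_mem_pivotSplit hA) (subset_of_mem_pivotSplit hB)

end

theorem pivot_preserves_consistency_general {V : Type*} (G : SimpleGraph V)
    (d : V → V → Prop) (hd : IsTransOrientationOn G Set.univ d)
    (x : V) (hx : ∀ b, G.Adj x b → d x b) :
    ConsistentLE G d [{x}, Set.univ \ {x}] ∧
    ∀ (L : List (Set V)) (p : V) (ip : ℕ),
      ConsistentLE G d L → ip < L.length → p ∈ L.getD ip ∅ →
      ConsistentLE G d (pivotRefine G p L ip) :=
  ⟨consistentLE_source_split hd hx, fun _ _ _ hL _ hp =>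
    (consistentLE_iff_pairwise hd).2
      (pivotRefine_pairwise hd ((consistentLE_iff_pairwise hd).1 hL) hp)⟩

/-- for a prime comparability graph with transitive orientation `d` and
source vertex `x`, the ordered partition `({x}, V ∖ {x})` is consistent with a linear
extension, and the pivot refinement preserves consistency with a linear extension. -/
theorem pivot_preserves_consistency {V : Type*} (G : SimpleGraph V)
    (hp : IsPrimeGraph G)
    (d : V → V → Prop) (hd : IsTransOrientationOn G Set.univ d)
    (x : V) (hx : ∀ b, G.Adj x b → d x b) :
    ConsistentLE G d [{x}, Set.univ \ {x}] ∧
    ∀ (L : List (Set V)) (p : V) (ip : ℕ),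
      ConsistentLE G d L → ip < L.length → p ∈ L.getD ip ∅ →
      ConsistentLE G d (pivotRefine G p L ip) :=
  pivot_preserves_consistency_general G d hd x hx
end
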